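/- arXiv:2011.05524 — 8 statements merged into one kernel-verified Lean document; each statement's English description precedes it below -/
import Mathlib

section
/- Let n, m ≥ 1. Let ẋ, a, F_lo, F_hi ∈ ℝⁿ, u ∈ ℝᵐ, and B, G_lo, G_hi ∈ ℝ^{n×m}. Assume ẋ = a + B·u, that F_lo ≤ a ≤ F_hi componentwise, and G_lo ≤ B ≤ G_hi entrywise. Then for every k ∈ {1,…,n}: max(F_lo_k, ẋ_k − Σ_{l=1}^m max((G_lo)_{k,l}·u_l, (G_hi)_{k,l}·u_l)) ≤ a_k ≤ min(F_hi_k, ẋ_k − Σ_{l=1}^m min((G_lo)_{k,l}·u_l, (G_hi)_{k,l}·u_l)). -/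
open Finset

section IntervalProducts

variable {α : Type*} [Ring α] [LinearOrder α] [IsOrderedRing α]

theorem mul_right_mem_Icc_min_max {b lo hi : α} (hb : b ∈ Set.Icc lo hi) (u : α) :
    b * u ∈ Set.Icc (min (lo * u) (hi * u)) (max (lo * u) (hi * u)) := by
  rcases le_total 0 u with hu | hu
  · exact ⟨(min_le_left _ _).trans (mul_le_mul_of_nonneg_right hb.1 hu),
      (mul_le_mul_of_nonneg_right hb.2 hu).trans (le_max_right _ _)⟩
  · exact ⟨(min_le_right _ _).trans (mul_le_mul_of_nonpos_right hb.2 hu),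
      (mul_le_mul_of_nonpos_right hb.1 hu).trans (le_max_left _ _)⟩

theorem sum_mul_mem_Icc_sum_min_sum_max {ι : Type*} (s : Finset ι) {b lo hi : ι → α}
    (hb : ∀ l ∈ s, b l ∈ Set.Icc (lo l) (hi l)) (u : ι → α) :
    ∑ l ∈ s, b l * u l ∈ Set.Icc (∑ l ∈ s, min (lo l * u l) (hi l * u l))
      (∑ l ∈ s, max (lo l * u l) (hi l * u l)) :=
  ⟨sum_le_sum fun l hl => (mul_right_mem_Icc_min_max (hb l hl) (u l)).1,
    sum_le_sum fun l hl => (mul_right_mem_Icc_min_max (hb l hl) (u l)).2⟩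

end IntervalProducts

theorem contraction_sound_general (n m : ℕ)
    (xdot a Flo Fhi : Fin n → ℝ) (u : Fin m → ℝ)
    (B Glo Ghi : Fin n → Fin m → ℝ)
    (heq : ∀ k, xdot k = a k + ∑ l, B k l * u l)
    (hF : ∀ k, Flo k ≤ a k ∧ a k ≤ Fhi k)
    (hG : ∀ k l, Glo k l ≤ B k l ∧ B k l ≤ Ghi k l) :
    ∀ k, max (Flo k) (xdot k - ∑ l, max (Glo k l * u l) (Ghi k l * u l)) ≤ a k ∧
      a k ≤ min (Fhi k) (xdot k - ∑ l, min (Glo k l * u l) (Ghi k l * u l)) := by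
  intro k
  obtain ⟨hBu_lo, hBu_hi⟩ :=
    sum_mul_mem_Icc_sum_min_sum_max univ (fun l _ => hG k l) u
  have hxdot := heq k
  exact ⟨max_le (hF k).1 (by linarith), le_min (hF k).2 (by linarith)⟩

theorem contraction_sound (n m : ℕ) (hn : 1 ≤ n) (hm : 1 ≤ m)
    (xdot a Flo Fhi : Fin n → ℝ) (u : Fin m → ℝ)
    (B Glo Ghi : Fin n → Fin m → ℝ)
    (heq : ∀ k, xdot k = a k + ∑ l, B k l * u l)
    (hF : ∀ k, Flo k ≤ a k ∧ a k ≤ Fhi k)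
    (hG : ∀ k l, Glo k l ≤ B k l ∧ B k l ≤ Ghi k l) :
    ∀ k, max (Flo k) (xdot k - ∑ l, max (Glo k l * u l) (Ghi k l * u l)) ≤ a k ∧
      a k ≤ min (Fhi k) (xdot k - ∑ l, min (Glo k l * u l) (Ghi k l * u l)) :=
  contraction_sound_general n m xdot a Flo Fhi u B Glo Ghi heq hF hG
end

section
/- Let n, m ≥ 1, ẋ ∈ ℝⁿ, u ∈ ℝᵐ, F_lo ≤ F_hi in ℝⁿ, and G_lo ≤ G_hi in ℝ^{n×m} (entrywise). For each k define m⁻_k = Σ_{l=1}^m min((G_lo)_{k,l}·u_l, (G_hi)_{k,l}·u_l), m⁺_k = Σ_{l=1}^m max((G_lo)_{k,l}·u_l, (G_hi)_{k,l}·u_l), L_k = max(F_lo_k, ẋ_k − m⁺_k) and U_k = min(F_hi_k, ẋ_k − m⁻_k). Assume L_j ≤ U_j for every j ∈ {1,…,n}. Then for every k, the set { a_k : a ∈ ℝⁿ, B ∈ ℝ^{n×m}, F_lo ≤ a ≤ F_hi, G_lo ≤ B ≤ G_hi, ẋ = a + B·u } is exactly the closed interval [L_k, U_k]. -/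
/-!
The constraint `ẋ = a + B u` decouples into rows, and in row `j` it only asks for
`∑ l, B j l * u l = ẋ j - a j` with `B j` in a box. Under the linear map `b ↦ ∑ l, b l * u l` the
box has a convex, hence interval, image, and its two extreme values `∑ min` and `∑ max` are
attained at vertices; so row `j` is feasible exactly when `a j ∈ [L j, U j]`. The value `v` is then
realised in row `k` by taking `a j = L j` in every other row.
-/

open Finset

section

variable {ι 𝕜 : Type*} [Fintype ι] [Field 𝕜] [LinearOrder 𝕜] [IsStrictOrderedRing 𝕜]

theorem exists_mem_Icc_sum_eq {lo hi : ι → 𝕜} (h : lo ≤ hi) {s : 𝕜}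
    (hs : s ∈ Set.Icc (∑ i, lo i) (∑ i, hi i)) : ∃ c ∈ Set.Icc lo hi, ∑ i, c i = s := by
  have hconvex : Convex 𝕜 ((fun c : ι → 𝕜 => ∑ i, c i) '' Set.Icc lo hi) :=
    (convex_Icc lo hi).is_linear_image
      ⟨fun _ _ => sum_add_distrib, fun _ _ => by simp only [Pi.smul_apply, smul_eq_mul, mul_sum]⟩
  exact convex_iff_ordConnected.1 hconvex |>.out ⟨lo, Set.left_mem_Icc.2 h, rfl⟩
    ⟨hi, Set.right_mem_Icc.2 h, rfl⟩ hs

theorem sum_mul_mem_Icc {glo ghi b u : ι → 𝕜} (hb : ∀ i, b i ∈ Set.Icc (glo i) (ghi i)) :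
    ∑ i, b i * u i ∈
      Set.Icc (∑ i, min (glo i * u i) (ghi i * u i)) (∑ i, max (glo i * u i) (ghi i * u i)) := by
  have hmul : ∀ i, b i * u i ∈ Set.uIcc (glo i * u i) (ghi i * u i) := fun i => by
    rw [← Set.image_mul_const_uIcc]
    exact ⟨b i, Set.Icc_subset_uIcc (hb i), rfl⟩
  exact ⟨sum_le_sum fun i _ => (hmul i).1, sum_le_sum fun i _ => (hmul i).2⟩

theorem exists_mem_Icc_sum_mul_eq {glo ghi u : ι → 𝕜} (hg : ∀ i, glo i ≤ ghi i) {s : 𝕜}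
    (hs : s ∈ Set.Icc (∑ i, min (glo i * u i) (ghi i * u i))
      (∑ i, max (glo i * u i) (ghi i * u i))) :
    ∃ b : ι → 𝕜, (∀ i, b i ∈ Set.Icc (glo i) (ghi i)) ∧ ∑ i, b i * u i = s := by
  obtain ⟨c, hc, rfl⟩ := exists_mem_Icc_sum_eq (fun i => min_le_max) hs
  have hpre : ∀ i, ∃ b ∈ Set.Icc (glo i) (ghi i), b * u i = c i := fun i => by
    have hci : c i ∈ Set.uIcc (glo i * u i) (ghi i * u i) := ⟨hc.1 i, hc.2 i⟩
    rwa [← Set.image_mul_const_uIcc, Set.uIcc_of_le (hg i)] at hci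
  choose b hb hbc using hpre
  exact ⟨b, hb, sum_congr rfl fun i _ => hbc i⟩

theorem mem_Icc_contract_iff {flo fhi x a : 𝕜} {glo ghi u : ι → 𝕜} (hg : ∀ i, glo i ≤ ghi i) :
    a ∈ Set.Icc (max flo (x - ∑ i, max (glo i * u i) (ghi i * u i)))
        (min fhi (x - ∑ i, min (glo i * u i) (ghi i * u i))) ↔
      a ∈ Set.Icc flo fhi ∧
        ∃ b : ι → 𝕜, (∀ i, b i ∈ Set.Icc (glo i) (ghi i)) ∧ x = a + ∑ i, b i * u i := by
  simp only [Set.mem_Icc, max_le_iff, le_min_iff]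
  constructor
  · rintro ⟨⟨hflo, hlo⟩, hfhi, hhi⟩
    obtain ⟨b, hb, hsum⟩ := exists_mem_Icc_sum_mul_eq hg (s := x - a) ⟨by linarith, by linarith⟩
    exact ⟨⟨hflo, hfhi⟩, b, hb, by rw [hsum]; ring⟩
  · rintro ⟨⟨hflo, hfhi⟩, b, hb, rfl⟩
    have hsum := sum_mul_mem_Icc (u := u) hb
    exact ⟨⟨hflo, by linarith [hsum.2]⟩, hfhi, by linarith [hsum.1]⟩

end

theorem contraction_optimal_general (n m : ℕ)
    (xdot Flo Fhi : Fin n → ℝ) (u : Fin m → ℝ)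
    (Glo Ghi : Fin n → Fin m → ℝ)
    (hG : ∀ k l, Glo k l ≤ Ghi k l)
    (L U : Fin n → ℝ)
    (hL : ∀ k, L k = max (Flo k) (xdot k - ∑ l, max (Glo k l * u l) (Ghi k l * u l)))
    (hU : ∀ k, U k = min (Fhi k) (xdot k - ∑ l, min (Glo k l * u l) (Ghi k l * u l)))
    (hLU : ∀ j, L j ≤ U j) :
    ∀ k, {v : ℝ | ∃ (a : Fin n → ℝ) (B : Fin n → Fin m → ℝ),
        (∀ j, Flo j ≤ a j ∧ a j ≤ Fhi j) ∧
        (∀ j l, Glo j l ≤ B j l ∧ B j l ≤ Ghi j l) ∧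
        (∀ j, xdot j = a j + ∑ l, B j l * u l) ∧ v = a k} = Set.Icc (L k) (U k) := by
  have hrow : ∀ j w, w ∈ Set.Icc (L j) (U j) ↔ w ∈ Set.Icc (Flo j) (Fhi j) ∧
      ∃ b : Fin m → ℝ, (∀ l, b l ∈ Set.Icc (Glo j l) (Ghi j l)) ∧ xdot j = w + ∑ l, b l * u l :=
    fun j w => by rw [hL, hU]; exact mem_Icc_contract_iff (hG j)
  intro k
  ext v
  constructor
  · rintro ⟨a, B, ha, hB, hx, rfl⟩
    exact (hrow k (a k)).2 ⟨ha k, B k, hB k, hx k⟩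
  · intro hv
    set a := Function.update L k v
    have ha : ∀ j, a j ∈ Set.Icc (L j) (U j) := fun j => by
      rcases eq_or_ne j k with rfl | hj
      · simpa [a] using hv
      · simpa [a, hj] using hLU j
    choose haF B hB hx using fun j => (hrow j (a j)).1 (ha j)
    exact ⟨a, B, haF, hB, hx, by simp [a]⟩

theorem contraction_optimal (n m : ℕ) (hn : 1 ≤ n) (hm : 1 ≤ m)
    (xdot Flo Fhi : Fin n → ℝ) (u : Fin m → ℝ)
    (Glo Ghi : Fin n → Fin m → ℝ)
    (hF : ∀ k, Flo k ≤ Fhi k) (hG : ∀ k l, Glo k l ≤ Ghi k l)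
    (L U : Fin n → ℝ)
    (hL : ∀ k, L k = max (Flo k) (xdot k - ∑ l, max (Glo k l * u l) (Ghi k l * u l)))
    (hU : ∀ k, U k = min (Fhi k) (xdot k - ∑ l, min (Glo k l * u l) (Ghi k l * u l)))
    (hLU : ∀ j, L j ≤ U j) :
    ∀ k, {v : ℝ | ∃ (a : Fin n → ℝ) (B : Fin n → Fin m → ℝ),
        (∀ j, Flo j ≤ a j ∧ a j ≤ Fhi j) ∧
        (∀ j l, Glo j l ≤ B j l ∧ B j l ≤ Ghi j l) ∧
        (∀ j, xdot j = a j + ∑ l, B j l * u l) ∧ v = a k} = Set.Icc (L k) (U k) :=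
  contraction_optimal_general n m xdot Flo Fhi u Glo Ghi hG L U hL hU hLU
end

section
/- Let n, m ≥ 1, X ⊆ ℝⁿ, f : X → ℝⁿ and G : X → ℝ^{n×m} with componentwise Lipschitz bounds: |f_k(x) − f_k(y)| ≤ L_{f,k}·‖x − y‖₂ and |G_{k,l}(x) − G_{k,l}(y)| ≤ L_{G,k,l}·‖x − y‖₂ for all x, y ∈ X, all k ∈ {1,…,n}, l ∈ {1,…,m}, where ‖·‖₂ is the Euclidean norm. Let I be a finite index set and for each i ∈ I let x_i ∈ X, lo^f_i ≤ hi^f_i in ℝⁿ and lo^G_i ≤ hi^G_i in ℝ^{n×m} with lo^f_{i,k} ≤ f_k(x_i) ≤ hi^f_{i,k} and lo^G_{i,k,l} ≤ G_{k,l}(x_i) ≤ hi^G_{i,k,l}. Let x : ℝ → X and u : ℝ → ℝᵐ, and suppose that at some time t the function x is differentiable with derivative ẋ(t) = f(x(t)) + G(x(t))·u(t). Then there exist a ∈ ℝⁿ and B ∈ ℝ^{n×m} with ẋ(t) = a + B·u(t), such that for every i ∈ I, k, l: lo^f_{i,k} − L_{f,k}·‖x(t) − x_i‖₂ ≤ a_k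 ≤ hi^f_{i,k} + L_{f,k}·‖x(t) − x_i‖₂ and lo^G_{i,k,l} − L_{G,k,l}·‖x(t) − x_i‖₂ ≤ B_{k,l} ≤ hi^G_{i,k,l} + L_{G,k,l}·‖x(t) − x_i‖₂. -/
open Finset

theorem sub_le_and_le_add_of_abs_sub_le {v w lo hi r : ℝ} (hw : lo ≤ w ∧ w ≤ hi)
    (hvw : |v - w| ≤ r) : lo - r ≤ v ∧ v ≤ hi + r := by
  obtain ⟨hlo, hhi⟩ := abs_sub_le_iff.mp hvw
  constructor <;> linarith [hw.1, hw.2]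

theorem data_driven_differential_inclusion_general (n m : ℕ)
    (ι : Type*) (I : Finset ι)
    (X : Set (Fin n → ℝ))
    (f : (Fin n → ℝ) → Fin n → ℝ) (G : (Fin n → ℝ) → Fin n → Fin m → ℝ)
    (Lf : Fin n → ℝ) (LG : Fin n → Fin m → ℝ)
    (hLipf : ∀ x ∈ X, ∀ y ∈ X, ∀ k,
      |f x k - f y k| ≤ Lf k * Real.sqrt (∑ j, (x j - y j) ^ 2))
    (hLipG : ∀ x ∈ X, ∀ y ∈ X, ∀ k l,
      |G x k l - G y k l| ≤ LG k l * Real.sqrt (∑ j, (x j - y j) ^ 2))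
    (xs : ι → Fin n → ℝ) (lof hif : ι → Fin n → ℝ) (loG hiG : ι → Fin n → Fin m → ℝ)
    (hxs : ∀ i ∈ I, xs i ∈ X)
    (hencf : ∀ i ∈ I, ∀ k, lof i k ≤ f (xs i) k ∧ f (xs i) k ≤ hif i k)
    (hencG : ∀ i ∈ I, ∀ k l, loG i k l ≤ G (xs i) k l ∧ G (xs i) k l ≤ hiG i k l)
    (x : ℝ → Fin n → ℝ) (u : ℝ → Fin m → ℝ) (t : ℝ)
    (hxX : ∀ s, x s ∈ X)
    (xdot : Fin n → ℝ)
    (hdyn : xdot = fun k => f (x t) k + ∑ l, G (x t) k l * u t l) :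
    ∃ (a : Fin n → ℝ) (B : Fin n → Fin m → ℝ),
      (∀ k, xdot k = a k + ∑ l, B k l * u t l) ∧
      (∀ i ∈ I, ∀ k,
        lof i k - Lf k * Real.sqrt (∑ j, (x t j - xs i j) ^ 2) ≤ a k ∧
        a k ≤ hif i k + Lf k * Real.sqrt (∑ j, (x t j - xs i j) ^ 2)) ∧
      (∀ i ∈ I, ∀ k l,
        loG i k l - LG k l * Real.sqrt (∑ j, (x t j - xs i j) ^ 2) ≤ B k l ∧
        B k l ≤ hiG i k l + LG k l * Real.sqrt (∑ j, (x t j - xs i j) ^ 2)) :=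
  ⟨f (x t), G (x t), congrFun hdyn,
    fun i hi k => sub_le_and_le_add_of_abs_sub_le (hencf i hi k)
      (hLipf _ (hxX t) _ (hxs i hi) k),
    fun i hi k l => sub_le_and_le_add_of_abs_sub_le (hencG i hi k l)
      (hLipG _ (hxX t) _ (hxs i hi) k l)⟩

theorem data_driven_differential_inclusion (n m : ℕ) (hn : 1 ≤ n) (hm : 1 ≤ m)
    (ι : Type*) (I : Finset ι)
    (X : Set (Fin n → ℝ))
    (f : (Fin n → ℝ) → Fin n → ℝ) (G : (Fin n → ℝ) → Fin n → Fin m → ℝ)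
    (Lf : Fin n → ℝ) (LG : Fin n → Fin m → ℝ)
    (hLipf : ∀ x ∈ X, ∀ y ∈ X, ∀ k,
      |f x k - f y k| ≤ Lf k * Real.sqrt (∑ j, (x j - y j) ^ 2))
    (hLipG : ∀ x ∈ X, ∀ y ∈ X, ∀ k l,
      |G x k l - G y k l| ≤ LG k l * Real.sqrt (∑ j, (x j - y j) ^ 2))
    (xs : ι → Fin n → ℝ) (lof hif : ι → Fin n → ℝ) (loG hiG : ι → Fin n → Fin m → ℝ)
    (hxs : ∀ i ∈ I, xs i ∈ X)
    (hloh : ∀ i ∈ I, ∀ k, lof i k ≤ hif i k)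
    (hlohG : ∀ i ∈ I, ∀ k l, loG i k l ≤ hiG i k l)
    (hencf : ∀ i ∈ I, ∀ k, lof i k ≤ f (xs i) k ∧ f (xs i) k ≤ hif i k)
    (hencG : ∀ i ∈ I, ∀ k l, loG i k l ≤ G (xs i) k l ∧ G (xs i) k l ≤ hiG i k l)
    (x : ℝ → Fin n → ℝ) (u : ℝ → Fin m → ℝ) (t : ℝ)
    (hxX : ∀ s, x s ∈ X)
    (xdot : Fin n → ℝ)
    (hderiv : HasDerivAt x xdot t)
    (hdyn : xdot = fun k => f (x t) k + ∑ l, G (x t) k l * u t l) :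
    ∃ (a : Fin n → ℝ) (B : Fin n → Fin m → ℝ),
      (∀ k, xdot k = a k + ∑ l, B k l * u t l) ∧
      (∀ i ∈ I, ∀ k,
        lof i k - Lf k * Real.sqrt (∑ j, (x t j - xs i j) ^ 2) ≤ a k ∧
        a k ≤ hif i k + Lf k * Real.sqrt (∑ j, (x t j - xs i j) ^ 2)) ∧
      (∀ i ∈ I, ∀ k l,
        loG i k l - LG k l * Real.sqrt (∑ j, (x t j - xs i j) ^ 2) ≤ B k l ∧
        B k l ≤ hiG i k l + LG k l * Real.sqrt (∑ j, (x t j - xs i j) ^ 2)) :=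
  data_driven_differential_inclusion_general n m ι I X f G Lf LG hLipf hLipG xs lof hif loG hiG hxs
    hencf hencG x u t hxX xdot hdyn
end

section
/- Let n, m ≥ 1, let f : ℝⁿ → ℝⁿ and G : ℝⁿ → ℝ^{n×m} be continuous with componentwise Lipschitz bounds: |f_k(x) − f_k(y)| ≤ L_{f,k}·‖x − y‖₂ and |G_{k,l}(x) − G_{k,l}(y)| ≤ L_{G,k,l}·‖x − y‖₂ for all x, y ∈ ℝⁿ and all k, l, where ‖·‖₂ is the Euclidean norm. Let t_i ∈ ℝ, Δt > 0, and let u : ℝ → ℝᵐ be continuous on [t_i, t_i + Δt] with |u_l(s)| ≤ V_l for all s ∈ [t_i, t_i + Δt] and all l. Let x : ℝ → ℝⁿ be differentiable at every t ∈ [t_i, t_i + Δt] with ẋ(t) = f(x(t)) + G(x(t))·u(t). Define β = sqrt( Σ_{k=1}^n ( L_{f,k} + Σ_{l=1}^m L_{G,k,l}·V_l )² ) and assume β > 0, and define α ∈ ℝⁿ by α_k = |f_k(x(t_i))| + Σ_{l=1}^m |G_{k,l}(x(t_i))|·V_l. Then for all t ∈ [t_i, t_i + Δt]: ‖x(t)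 − x(t_i)‖₂ ≤ (‖α‖₂ / β)·(exp(β·Δt) − 1). -/
/-!
Along the trajectory, each component of the vector field is bounded, by the Lipschitz bounds and
`|u_l| ≤ V_l`, by `α_k + c_k r` where `r = ‖x(s) - x(t_i)‖₂` and `c_k = L_{f,k} + Σ_l L_{G,k,l} V_l`.
Minkowski's inequality turns this into `‖ẋ(s)‖₂ ≤ β r + ‖α‖₂`, and Grönwall's inequality for
`x(·) - x(t_i)`, which vanishes at `t_i`, gives `r ≤ ‖α‖₂ / β · (exp (β (t - t_i)) - 1)`.
-/

open Finset Set

theorem EuclideanSpace.norm_toLp_eq_sqrt_sum_sq {ι : Type*} [Fintype ι] (v : ι → ℝ) :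
    ‖(WithLp.toLp 2 v : EuclideanSpace ℝ ι)‖ = √(∑ i, v i ^ 2) := by
  simp [EuclideanSpace.norm_eq]

theorem EuclideanSpace.norm_toLp_le_of_abs_le {ι : Type*} [Fintype ι] {v w : ι → ℝ}
    (h : ∀ i, |v i| ≤ w i) :
    ‖(WithLp.toLp 2 v : EuclideanSpace ℝ ι)‖ ≤ ‖(WithLp.toLp 2 w : EuclideanSpace ℝ ι)‖ := by
  simp only [EuclideanSpace.norm_toLp_eq_sqrt_sum_sq]
  exact Real.sqrt_le_sqrt <| sum_le_sum fun i _ =>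
    sq_le_sq' (abs_le.mp (h i)).1 (abs_le.mp (h i)).2

theorem norm_le_of_norm_deriv_le_of_eq_zero {E : Type*} [NormedAddCommGroup E] [NormedSpace ℝ E]
    {φ φ' : ℝ → E} {K A a b : ℝ} (hK : 0 < K) (hφ : ∀ t ∈ Icc a b, HasDerivAt φ (φ' t) t)
    (ha : φ a = 0) (bound : ∀ t ∈ Icc a b, ‖φ' t‖ ≤ K * ‖φ t‖ + A) :
    ∀ t ∈ Icc a b, ‖φ t‖ ≤ A / K * (Real.exp (K * (b - a)) - 1) := by
  intro t ht
  have hA : 0 ≤ A := by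
    have := bound a ⟨le_rfl, ht.1.trans ht.2⟩
    rw [ha, norm_zero, mul_zero, zero_add] at this
    exact (norm_nonneg _).trans this
  have hgronwall := norm_le_gronwallBound_of_norm_deriv_right_le
    (fun s hs => (hφ s hs).continuousAt.continuousWithinAt)
    (fun s hs => (hφ s (Ico_subset_Icc_self hs)).hasDerivWithinAt)
    (by rw [ha, norm_zero]) (fun s hs => bound s (Ico_subset_Icc_self hs)) t ht
  simp only [gronwallBound_of_K_ne_0 hK.ne', zero_mul, zero_add] at hgronwall
  refine hgronwall.trans (mul_le_mul_of_nonneg_left ?_ (div_nonneg hA hK.le))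
  gcongr
  exact ht.2

theorem abs_add_sum_mul_le_of_abs_sub_le {κ : Type*} [Fintype κ] {a a₀ La r : ℝ}
    {g g₀ Lg w V : κ → ℝ} (ha : |a - a₀| ≤ La * r) (hg : ∀ l, |g l - g₀ l| ≤ Lg l * r)
    (hw : ∀ l, |w l| ≤ V l) :
    |a + ∑ l, g l * w l| ≤ (|a₀| + ∑ l, |g₀ l| * V l) + (La + ∑ l, Lg l * V l) * r := by
  have hg_abs : ∀ l, |g l * w l| ≤ (|g₀ l| + Lg l * r) * V l := fun l => by
    have := abs_sub_abs_le_abs_sub (g l) (g₀ l)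
    rw [abs_mul]
    exact mul_le_mul (by linarith [hg l]) (hw l) (abs_nonneg _)
      (by linarith [abs_nonneg (g l), hg l])
  calc |a + ∑ l, g l * w l| ≤ |a| + ∑ l, |g l * w l| :=
        (abs_add_le _ _).trans (add_le_add_right (abs_sum_le_sum_abs _ _) _)
    _ ≤ (|a₀| + La * r) + ∑ l, (|g₀ l| + Lg l * r) * V l := by
        gcongr with l
        · linarith [abs_sub_abs_le_abs_sub a a₀]
        · exact hg_abs l
    _ = (|a₀| + ∑ l, |g₀ l| * V l) + (La + ∑ l, Lg l * V l) * r := by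
        simp only [add_mul, sum_add_distrib, sum_mul, mul_right_comm _ r]
        ring

theorem EuclideanSpace.norm_toLp_add_sum_mul_le {ι κ : Type*} [Fintype ι] [Fintype κ]
    {a a₀ La : ι → ℝ} {g g₀ Lg : ι → κ → ℝ} {w V : κ → ℝ} {r : ℝ} (hr : 0 ≤ r)
    (ha : ∀ k, |a k - a₀ k| ≤ La k * r) (hg : ∀ k l, |g k l - g₀ k l| ≤ Lg k l * r)
    (hw : ∀ l, |w l| ≤ V l) :
    ‖(WithLp.toLp 2 (fun k => a k + ∑ l, g k l * w l) : EuclideanSpace ℝ ι)‖ ≤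
      ‖(WithLp.toLp 2 (fun k => La k + ∑ l, Lg k l * V l) : EuclideanSpace ℝ ι)‖ * r +
        ‖(WithLp.toLp 2 (fun k => |a₀ k| + ∑ l, |g₀ k l| * V l) : EuclideanSpace ℝ ι)‖ := by
  set α : EuclideanSpace ℝ ι := WithLp.toLp 2 fun k => |a₀ k| + ∑ l, |g₀ k l| * V l
  set c : EuclideanSpace ℝ ι := WithLp.toLp 2 fun k => La k + ∑ l, Lg k l * V l
  have hsplit : (WithLp.toLp 2 fun k => (|a₀ k| + ∑ l, |g₀ k l| * V l) +
      (La k + ∑ l, Lg k l * V l) * r : EuclideanSpace ℝ ι) = α + r • c := by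
    ext k; simp [α, c, mul_comm]
  calc _ ≤ ‖α + r • c‖ := hsplit ▸ EuclideanSpace.norm_toLp_le_of_abs_le fun k =>
          abs_add_sum_mul_le_of_abs_sub_le (ha k) (hg k) hw
    _ ≤ ‖α‖ + ‖r • c‖ := norm_add_le _ _
    _ = ‖c‖ * r + ‖α‖ := by rw [norm_smul, Real.norm_of_nonneg hr, add_comm, mul_comm]

theorem trajectory_variation_general (n m : ℕ)
    (f : (Fin n → ℝ) → Fin n → ℝ) (G : (Fin n → ℝ) → Fin n → Fin m → ℝ)
    (Lf : Fin n → ℝ) (LG : Fin n → Fin m → ℝ)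
    (hLipf : ∀ x y : Fin n → ℝ, ∀ k,
      |f x k - f y k| ≤ Lf k * Real.sqrt (∑ j, (x j - y j) ^ 2))
    (hLipG : ∀ x y : Fin n → ℝ, ∀ k l,
      |G x k l - G y k l| ≤ LG k l * Real.sqrt (∑ j, (x j - y j) ^ 2))
    (ti Δt : ℝ)
    (u : ℝ → Fin m → ℝ)
    (V : Fin m → ℝ) (hV : ∀ s ∈ Set.Icc ti (ti + Δt), ∀ l, |u s l| ≤ V l)
    (x : ℝ → Fin n → ℝ)
    (hx : ∀ t ∈ Set.Icc ti (ti + Δt),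
      HasDerivAt x (fun k => f (x t) k + ∑ l, G (x t) k l * u t l) t)
    (β : ℝ) (hβdef : β = Real.sqrt (∑ k, (Lf k + ∑ l, LG k l * V l) ^ 2)) (hβ : 0 < β)
    (α : Fin n → ℝ)
    (hα : ∀ k, α k = |f (x ti) k| + ∑ l, |G (x ti) k l| * V l) :
    ∀ t ∈ Set.Icc ti (ti + Δt),
      Real.sqrt (∑ i, (x t i - x ti i) ^ 2) ≤
        (Real.sqrt (∑ k, (α k) ^ 2) / β) * (Real.exp (β * Δt) - 1) := by
  set φ : ℝ → EuclideanSpace ℝ (Fin n) := fun s => WithLp.toLp 2 (x s - x ti)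
  have hφ_norm : ∀ s, ‖φ s‖ = √(∑ j, (x s j - x ti j) ^ 2) := fun s =>
    EuclideanSpace.norm_toLp_eq_sqrt_sum_sq _
  set φ' : ℝ → EuclideanSpace ℝ (Fin n) := fun s =>
    WithLp.toLp 2 fun k => f (x s) k + ∑ l, G (x s) k l * u s l
  have hφ_deriv : ∀ s ∈ Icc ti (ti + Δt), HasDerivAt φ (φ' s) s := fun s hs =>
    (EuclideanSpace.equiv (Fin n) ℝ).symm.hasFDerivAt.comp_hasDerivAt s
      ((hx s hs).sub_const (x ti))
  have hφ'_le : ∀ s ∈ Icc ti (ti + Δt), ‖φ' s‖ ≤ β * ‖φ s‖ + √(∑ k, α k ^ 2) := by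
    intro s hs
    have h := EuclideanSpace.norm_toLp_add_sum_mul_le (norm_nonneg (φ s))
      (fun k => (hφ_norm s).symm ▸ hLipf (x s) (x ti) k)
      (fun k l => (hφ_norm s).symm ▸ hLipG (x s) (x ti) k l) (hV s hs)
    simp only [φ', EuclideanSpace.norm_toLp_eq_sqrt_sum_sq, ← hβdef, ← hα] at h ⊢
    linarith
  intro t ht
  have h := norm_le_of_norm_deriv_le_of_eq_zero hβ hφ_deriv (by simp [φ]) hφ'_le t ht
  rwa [hφ_norm, add_sub_cancel_left] at h

theorem trajectory_variation (n m : ℕ) (hn : 1 ≤ n) (hm : 1 ≤ m)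
    (f : (Fin n → ℝ) → Fin n → ℝ) (G : (Fin n → ℝ) → Fin n → Fin m → ℝ)
    (hfc : Continuous f) (hGc : Continuous G)
    (Lf : Fin n → ℝ) (LG : Fin n → Fin m → ℝ)
    (hLipf : ∀ x y : Fin n → ℝ, ∀ k,
      |f x k - f y k| ≤ Lf k * Real.sqrt (∑ j, (x j - y j) ^ 2))
    (hLipG : ∀ x y : Fin n → ℝ, ∀ k l,
      |G x k l - G y k l| ≤ LG k l * Real.sqrt (∑ j, (x j - y j) ^ 2))
    (ti Δt : ℝ) (hΔt : 0 < Δt)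
    (u : ℝ → Fin m → ℝ) (huc : ContinuousOn u (Set.Icc ti (ti + Δt)))
    (V : Fin m → ℝ) (hV : ∀ s ∈ Set.Icc ti (ti + Δt), ∀ l, |u s l| ≤ V l)
    (x : ℝ → Fin n → ℝ)
    (hx : ∀ t ∈ Set.Icc ti (ti + Δt),
      HasDerivAt x (fun k => f (x t) k + ∑ l, G (x t) k l * u t l) t)
    (β : ℝ) (hβdef : β = Real.sqrt (∑ k, (Lf k + ∑ l, LG k l * V l) ^ 2)) (hβ : 0 < β)
    (α : Fin n → ℝ)
    (hα : ∀ k, α k = |f (x ti) k| + ∑ l, |G (x ti) k l| * V l) :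
    ∀ t ∈ Set.Icc ti (ti + Δt),
      Real.sqrt (∑ i, (x t i - x ti i) ^ 2) ≤
        (Real.sqrt (∑ k, (α k) ^ 2) / β) * (Real.exp (β * Δt) - 1) :=
  trajectory_variation_general n m f G Lf LG hLipf hLipG ti Δt u V hV x hx β hβdef hβ α hα
end

section
/- Let n, m ≥ 1, and let f : ℝⁿ → ℝⁿ and G : ℝⁿ → ℝ^{n×m} have componentwise Lipschitz bounds: |f_k(x) − f_k(y)| ≤ L_{f,k}·‖x − y‖₂ and |G_{k,l}(x) − G_{k,l}(y)| ≤ L_{G,k,l}·‖x − y‖₂ for all x, y ∈ ℝⁿ and all k, l, where ‖·‖₂ is the Euclidean norm. Let V ⊆ ℝᵐ and V_l ≥ 0 with |u_l| ≤ V_l for every u ∈ V and every l. Let R = ∏_{k=1}^n [r_lo_k, r_hi_k] with r_lo ≤ r_hi, and let M ≥ 0 satisfy |f_k(x) + Σ_{l=1}^m G_{k,l}(x)·u_l| ≤ M for all x ∈ R, u ∈ V and k. Define β = sqrt( Σ_{k=1}^n ( L_{f,k} + Σ_{l=1}^m L_{G,k,l}·V_l )² ), let Δt > 0 satisfy √n·β·Δt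 < 1, set μ = Δt·M / (1 − √n·β·Δt) and S = ∏_{k=1}^n [r_lo_k − μ, r_hi_k + μ]. Then for every x₀ ∈ R, s ∈ S, u ∈ V and τ ∈ [0, Δt]: x₀ + τ·(f(s) + G(s)·u) ∈ S. -/
/-!
Projecting a point `s ∈ S` coordinatewise onto `R` moves each coordinate by at most `μ`, hence moves
`s` by at most `√n μ` in the Euclidean norm. Since the `k`-th component of `h(·, u)` is Lipschitz
with constant `L_{f,k} + ∑ₗ L_{G,k,l} V_l ≤ β`, this gives `|h_k(s, u)| ≤ M + √n β μ` on `S × V`.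
A step of length `τ ≤ Δt` from `x₀ ∈ R` thus moves each coordinate by at most `Δt (M + √n β μ)`,
which equals `μ` by the choice of `μ`.
-/

open Finset

lemma abs_sub_max_min_le {a b x μ : ℝ} (hμ : 0 ≤ μ) (h₁ : a - μ ≤ x) (h₂ : x ≤ b + μ) :
    |x - max a (min x b)| ≤ μ := by
  grind [abs_le]

section Euclidean

variable {ι : Type*} [Fintype ι]

lemma sqrt_sum_sq_le_sqrt_card_mul {d : ι → ℝ} {c : ℝ} (hc : 0 ≤ c) (hd : ∀ j, |d j| ≤ c) :
    Real.sqrt (∑ j, d j ^ 2) ≤ Real.sqrt (Fintype.card ι) * c :=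
  calc Real.sqrt (∑ j, d j ^ 2) ≤ Real.sqrt (∑ _j : ι, c ^ 2) :=
        Real.sqrt_le_sqrt <| sum_le_sum fun j _ => sq_le_sq' (abs_le.1 (hd j)).1 (abs_le.1 (hd j)).2
    _ = Real.sqrt (Fintype.card ι) * c := by
        rw [sum_const, card_univ, nsmul_eq_mul, Real.sqrt_mul (Nat.cast_nonneg _), Real.sqrt_sq hc]

lemma le_sqrt_sum_sq (w : ι → ℝ) (k : ι) : w k ≤ Real.sqrt (∑ i, w i ^ 2) :=
  (le_abs_self _).trans <|
    Real.abs_le_sqrt (single_le_sum (fun i _ => sq_nonneg (w i)) (mem_univ k))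

end Euclidean

lemma abs_add_sum_mul_sub_add_sum_mul_le {κ : Type*} [Fintype κ] {a b L D : ℝ}
    {g g' LG u V : κ → ℝ} (hab : |a - b| ≤ L * D) (hg : ∀ l, |g l - g' l| ≤ LG l * D)
    (hu : ∀ l, |u l| ≤ V l) :
    |(a + ∑ l, g l * u l) - (b + ∑ l, g' l * u l)| ≤ (L + ∑ l, LG l * V l) * D := by
  have hsum : |∑ l, (g l - g' l) * u l| ≤ (∑ l, LG l * V l) * D :=
    calc |∑ l, (g l - g' l) * u l| ≤ ∑ l, |g l - g' l| * |u l| := by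
          simpa only [abs_mul] using abs_sum_le_sum_abs (fun l => (g l - g' l) * u l) univ
      _ ≤ ∑ l, LG l * D * V l :=
          sum_le_sum fun l _ =>
            mul_le_mul (hg l) (hu l) (abs_nonneg _) ((abs_nonneg _).trans (hg l))
      _ = (∑ l, LG l * V l) * D := by rw [sum_mul]; exact sum_congr rfl fun l _ => by ring
  calc |(a + ∑ l, g l * u l) - (b + ∑ l, g' l * u l)| = |(a - b) + ∑ l, (g l - g' l) * u l| := by
        simp only [sub_mul, sum_sub_distrib]; ring_nf
    _ ≤ |a - b| + |∑ l, (g l - g' l) * u l| := abs_add_le _ _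
    _ ≤ (L + ∑ l, LG l * V l) * D := by linarith

lemma mul_add_mul_eq_self_of_eq_div {Δ M c μ : ℝ} (h : 1 - c * Δ ≠ 0)
    (hμ : μ = Δ * M / (1 - c * Δ)) : Δ * (M + c * μ) = μ := by
  have hfix : μ * (1 - c * Δ) = Δ * M := hμ ▸ div_mul_cancel₀ _ h
  linear_combination -hfix

lemma abs_control_affine_le_of_mem_inflated_box {ι κ : Type*} [Fintype ι] [Fintype κ]
    {f : (ι → ℝ) → ι → ℝ} {G : (ι → ℝ) → ι → κ → ℝ} {Lf : ι → ℝ} {LG : ι → κ → ℝ}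
    (hLipf : ∀ x y : ι → ℝ, ∀ k, |f x k - f y k| ≤ Lf k * Real.sqrt (∑ j, (x j - y j) ^ 2))
    (hLipG : ∀ x y : ι → ℝ, ∀ k l,
      |G x k l - G y k l| ≤ LG k l * Real.sqrt (∑ j, (x j - y j) ^ 2))
    {u Vb : κ → ℝ} (hu : ∀ l, |u l| ≤ Vb l) {rlo rhi : ι → ℝ} (hr : ∀ k, rlo k ≤ rhi k)
    {M : ℝ} (hMb : ∀ x : ι → ℝ, (∀ k, rlo k ≤ x k ∧ x k ≤ rhi k) → ∀ k,
      |f x k + ∑ l, G x k l * u l| ≤ M)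
    {μ : ℝ} (hμ : 0 ≤ μ) {s : ι → ℝ} (hs : ∀ k, rlo k - μ ≤ s k ∧ s k ≤ rhi k + μ) (k : ι) :
    |f s k + ∑ l, G s k l * u l| ≤
      M + Real.sqrt (Fintype.card ι) * Real.sqrt (∑ k, (Lf k + ∑ l, LG k l * Vb l) ^ 2) * μ := by
  set p : ι → ℝ := fun j => max (rlo j) (min (s j) (rhi j))
  set β := Real.sqrt (∑ k, (Lf k + ∑ l, LG k l * Vb l) ^ 2)
  set D := Real.sqrt (∑ j, (s j - p j) ^ 2)
  have hpR : ∀ j, rlo j ≤ p j ∧ p j ≤ rhi j :=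
    fun j => ⟨le_max_left _ _, max_le (hr j) (min_le_right _ _)⟩
  have hD : D ≤ Real.sqrt (Fintype.card ι) * μ :=
    sqrt_sum_sq_le_sqrt_card_mul hμ fun j => abs_sub_max_min_le hμ (hs j).1 (hs j).2
  have hLip : |(f s k + ∑ l, G s k l * u l) - (f p k + ∑ l, G p k l * u l)| ≤ β * D :=
    (abs_add_sum_mul_sub_add_sum_mul_le (hLipf s p k) (hLipG s p k) hu).trans <|
      mul_le_mul_of_nonneg_right (le_sqrt_sum_sq (fun k => Lf k + ∑ l, LG k l * Vb l) k)
        (Real.sqrt_nonneg _)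
  calc |f s k + ∑ l, G s k l * u l|
      ≤ |f p k + ∑ l, G p k l * u l| +
          |(f s k + ∑ l, G s k l * u l) - (f p k + ∑ l, G p k l * u l)| := by
        linarith [abs_sub_abs_le_abs_sub (f s k + ∑ l, G s k l * u l) (f p k + ∑ l, G p k l * u l)]
    _ ≤ M + β * D := add_le_add (hMb p hpR k) hLip
    _ ≤ M + β * (Real.sqrt (Fintype.card ι) * μ) := by gcongr
    _ = M + Real.sqrt (Fintype.card ι) * β * μ := by ring

theorem explicit_rough_enclosure_general (n m : ℕ)
    (f : (Fin n → ℝ) → Fin n → ℝ) (G : (Fin n → ℝ) → Fin n → Fin m → ℝ)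
    (Lf : Fin n → ℝ) (LG : Fin n → Fin m → ℝ)
    (hLipf : ∀ x y : Fin n → ℝ, ∀ k,
      |f x k - f y k| ≤ Lf k * Real.sqrt (∑ j, (x j - y j) ^ 2))
    (hLipG : ∀ x y : Fin n → ℝ, ∀ k l,
      |G x k l - G y k l| ≤ LG k l * Real.sqrt (∑ j, (x j - y j) ^ 2))
    (V : Set (Fin m → ℝ)) (Vb : Fin m → ℝ)
    (hVbnd : ∀ u ∈ V, ∀ l, |u l| ≤ Vb l)
    (rlo rhi : Fin n → ℝ) (hr : ∀ k, rlo k ≤ rhi k)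
    (M : ℝ) (hM : 0 ≤ M)
    (hMb : ∀ x : Fin n → ℝ, (∀ k, rlo k ≤ x k ∧ x k ≤ rhi k) → ∀ u ∈ V, ∀ k,
      |f x k + ∑ l, G x k l * u l| ≤ M)
    (β : ℝ) (hβdef : β = Real.sqrt (∑ k, (Lf k + ∑ l, LG k l * Vb l) ^ 2))
    (Δt : ℝ) (hΔt : 0 < Δt) (hstep : Real.sqrt n * β * Δt < 1)
    (μ : ℝ) (hμ : μ = Δt * M / (1 - Real.sqrt n * β * Δt)) :
    ∀ x₀ : Fin n → ℝ, (∀ k, rlo k ≤ x₀ k ∧ x₀ k ≤ rhi k) →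
    ∀ s : Fin n → ℝ, (∀ k, rlo k - μ ≤ s k ∧ s k ≤ rhi k + μ) →
    ∀ u ∈ V, ∀ τ ∈ Set.Icc (0 : ℝ) Δt, ∀ k,
      rlo k - μ ≤ x₀ k + τ * (f s k + ∑ l, G s k l * u l) ∧
      x₀ k + τ * (f s k + ∑ l, G s k l * u l) ≤ rhi k + μ := by
  intro x₀ hx₀ s hs u hu τ hτ k
  have hden : 0 < 1 - Real.sqrt n * β * Δt := sub_pos.2 hstep
  have hμ0 : 0 ≤ μ := hμ ▸ div_nonneg (mul_nonneg hΔt.le hM) hden.le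
  have hrange := abs_control_affine_le_of_mem_inflated_box hLipf hLipG (hVbnd u hu) hr
    (fun x hx => hMb x hx u hu) hμ0 hs k
  rw [Fintype.card_fin, ← hβdef] at hrange
  have hmove : |τ * (f s k + ∑ l, G s k l * u l)| ≤ μ :=
    calc |τ * (f s k + ∑ l, G s k l * u l)| = τ * |f s k + ∑ l, G s k l * u l| := by
          rw [abs_mul, abs_of_nonneg hτ.1]
      _ ≤ Δt * (M + Real.sqrt n * β * μ) := mul_le_mul hτ.2 hrange (abs_nonneg _) hΔt.le
      _ = μ := mul_add_mul_eq_self_of_eq_div hden.ne' hμ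
  obtain ⟨hlo, hhi⟩ := abs_le.1 hmove
  exact ⟨by linarith [(hx₀ k).1], by linarith [(hx₀ k).2]⟩

theorem explicit_rough_enclosure (n m : ℕ) (hn : 1 ≤ n) (hm : 1 ≤ m)
    (f : (Fin n → ℝ) → Fin n → ℝ) (G : (Fin n → ℝ) → Fin n → Fin m → ℝ)
    (Lf : Fin n → ℝ) (LG : Fin n → Fin m → ℝ)
    (hLipf : ∀ x y : Fin n → ℝ, ∀ k,
      |f x k - f y k| ≤ Lf k * Real.sqrt (∑ j, (x j - y j) ^ 2))
    (hLipG : ∀ x y : Fin n → ℝ, ∀ k l,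
      |G x k l - G y k l| ≤ LG k l * Real.sqrt (∑ j, (x j - y j) ^ 2))
    (V : Set (Fin m → ℝ)) (Vb : Fin m → ℝ) (hVb : ∀ l, 0 ≤ Vb l)
    (hVbnd : ∀ u ∈ V, ∀ l, |u l| ≤ Vb l)
    (rlo rhi : Fin n → ℝ) (hr : ∀ k, rlo k ≤ rhi k)
    (M : ℝ) (hM : 0 ≤ M)
    (hMb : ∀ x : Fin n → ℝ, (∀ k, rlo k ≤ x k ∧ x k ≤ rhi k) → ∀ u ∈ V, ∀ k,
      |f x k + ∑ l, G x k l * u l| ≤ M)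
    (β : ℝ) (hβdef : β = Real.sqrt (∑ k, (Lf k + ∑ l, LG k l * Vb l) ^ 2))
    (Δt : ℝ) (hΔt : 0 < Δt) (hstep : Real.sqrt n * β * Δt < 1)
    (μ : ℝ) (hμ : μ = Δt * M / (1 - Real.sqrt n * β * Δt)) :
    ∀ x₀ : Fin n → ℝ, (∀ k, rlo k ≤ x₀ k ∧ x₀ k ≤ rhi k) →
    ∀ s : Fin n → ℝ, (∀ k, rlo k - μ ≤ s k ∧ s k ≤ rhi k + μ) →
    ∀ u ∈ V, ∀ τ ∈ Set.Icc (0 : ℝ) Δt, ∀ k,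
      rlo k - μ ≤ x₀ k + τ * (f s k + ∑ l, G s k l * u l) ∧
      x₀ k + τ * (f s k + ∑ l, G s k l * u l) ≤ rhi k + μ :=
  explicit_rough_enclosure_general n m f G Lf LG hLipf hLipG V Vb hVbnd rlo rhi hr M hM hMb β hβdef
    Δt hΔt hstep μ hμ
end

section
/- Let n, m ≥ 1, S ⊆ ℝⁿ, and let f : ℝⁿ → ℝⁿ and G : ℝⁿ → ℝ^{n×m} be differentiable on an open set containing S, with |∂f_k/∂x_p(s)| ≤ L_{f,k}, |∂G_{k,l}/∂x_p(s)| ≤ L_{G,k,l}, |f_k(s)| ≤ F_k and |G_{k,l}(s)| ≤ Γ_{k,l} for all s ∈ S and all k, p ∈ {1,…,n}, l ∈ {1,…,m}. Let t₀ ∈ ℝ, Δt > 0, and let u : ℝ → ℝᵐ be differentiable on [t₀, t₀ + Δt] with |u_l(t)| ≤ V_l and |u̇_l(t)| ≤ W_l there. Let x : ℝ → ℝⁿ be differentiable on [t₀, t₀ + Δt] with ẋ(t) = f(x(t)) + G(x(t))·u(t) and x(t) ∈ S for all t ∈ [t₀, t₀ + Δt]. Then for every k: | x_k(t₀ + Δt)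 − x_k(t₀) − Δt·( f_k(x(t₀)) + Σ_{l=1}^m G_{k,l}(x(t₀))·u_l(t₀) ) | ≤ (Δt²/2)·[ ( L_{f,k} + Σ_{l=1}^m L_{G,k,l}·V_l )·Σ_{p=1}^n ( F_p + Σ_{l=1}^m Γ_{p,l}·V_l ) + Σ_{l=1}^m Γ_{k,l}·W_l ]. -/
/-!
Along the trajectory the velocity `ψ(t) = f(x t) + G(x t) u(t)` is differentiable with derivative
`Df(x) ẋ + (DG(x) ẋ) u + G(x) u̇`, which the hypotheses bound entrywise by the bracket `M` of the
claim. A velocity whose derivative is bounded by `M` drifts from `ψ(t₀)` by at most `M (t - t₀)`,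
so the deviation of `x` from its Euler prediction has derivative `ψ(t) - ψ(t₀)` of size at most
`M (t - t₀)`; comparing with `M (t - t₀)² / 2` gives the claim.
-/

open Finset Set

lemma abs_sum_mul_le {ι : Type*} (s : Finset ι) {a b A B : ι → ℝ}
    (ha : ∀ i ∈ s, |a i| ≤ A i) (hb : ∀ i ∈ s, |b i| ≤ B i) :
    |∑ i ∈ s, a i * b i| ≤ ∑ i ∈ s, A i * B i := by
  refine (abs_sum_le_sum_abs _ _).trans (sum_le_sum fun i hi => ?_)
  rw [abs_mul]
  exact mul_le_mul (ha i hi) (hb i hi) (abs_nonneg _) ((abs_nonneg _).trans (ha i hi))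

lemma ContinuousLinearMap.abs_apply_le_of_abs_apply_single_le {ι : Type*} [Fintype ι]
    [DecidableEq ι] (L : (ι → ℝ) →L[ℝ] ℝ) {v b : ι → ℝ} {C : ℝ}
    (hC : ∀ p, |L (Pi.single p 1)| ≤ C) (hb : ∀ p, |v p| ≤ b p) :
    |L v| ≤ C * ∑ p, b p := by
  have hLv : L v = ∑ p, v p * L (Pi.single p 1) := by
    conv_lhs => rw [← univ_sum_single v]
    refine (map_sum L _ _).trans (sum_congr rfl fun p _ => ?_)
    rw [← smul_eq_mul, ← map_smul, ← Pi.single_smul', smul_eq_mul, mul_one]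
  rw [hLv, mul_comm, sum_mul]
  exact abs_sum_mul_le _ (fun p _ => hb p) (fun p _ => hC p)

/-- Unlike `taylor_mean_remainder_bound`, this needs no continuity of the second derivative. -/
theorem norm_sub_sub_smul_le_of_norm_deriv2_le {E : Type*} [NormedAddCommGroup E]
    [NormedSpace ℝ E] {x ψ D : ℝ → E} {a b M : ℝ} (hab : a ≤ b)
    (hx : ∀ t ∈ Icc a b, HasDerivAt x (ψ t) t) (hψ : ∀ t ∈ Icc a b, HasDerivAt ψ (D t) t)
    (hD : ∀ t ∈ Icc a b, ‖D t‖ ≤ M) :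
    ‖x b - x a - (b - a) • ψ a‖ ≤ M * (b - a) ^ 2 / 2 := by
  have ha : a ∈ Icc a b := left_mem_Icc.mpr hab
  have hψ_drift : ∀ t ∈ Icc a b, ‖ψ t - ψ a‖ ≤ M * (t - a) := fun t ht => by
    simpa [Real.norm_eq_abs, abs_of_nonneg (sub_nonneg.mpr ht.1)] using
      (convex_Icc a b).norm_image_sub_le_of_norm_hasDerivWithin_le
        (fun s hs => (hψ s hs).hasDerivWithinAt) hD ha ht
  have hrem : ∀ t ∈ Icc a b,
      HasDerivAt (fun s => x s - x a - (s - a) • ψ a) (ψ t - ψ a) t := fun t ht => by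
    simpa using ((hx t ht).sub_const (x a)).fun_sub
      (((hasDerivAt_id t).sub_const a).smul_const (ψ a))
  have hbound : ∀ t, HasDerivAt (fun s => M * (s - a) ^ 2 / 2) (M * (t - a)) t := fun t => by
    refine (((((hasDerivAt_id t).sub_const a).fun_pow 2).const_mul M).div_const 2).congr_deriv ?_
    simp only [id_eq]
    ring
  exact image_norm_le_of_norm_deriv_right_le_deriv_boundary
    (fun t ht => (hrem t ht).continuousAt.continuousWithinAt)
    (fun t ht => (hrem t (Ico_subset_Icc_self ht)).hasDerivWithinAt) (by simp) hbound
    (fun t ht => hψ_drift t (Ico_subset_Icc_self ht)) (right_mem_Icc.mpr hab)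

lemma hasDerivAt_control_affine_field {E ι κ : Type*} [NormedAddCommGroup E] [NormedSpace ℝ E]
    [Fintype κ] {f : E → ι → ℝ} {G : E → ι → κ → ℝ} {x : ℝ → E} {u : ℝ → κ → ℝ}
    {v : E} {u' : κ → ℝ} {t : ℝ}
    (hf : DifferentiableAt ℝ f (x t)) (hG : DifferentiableAt ℝ G (x t))
    (hx : HasDerivAt x v t) (hu : HasDerivAt u u' t) (k : ι) :
    HasDerivAt (fun s => f (x s) k + ∑ l, G (x s) k l * u s l)
      (fderiv ℝ (fun y => f y k) (x t) v
        + (∑ l, fderiv ℝ (fun y => G y k l) (x t) v * u t l + ∑ l, G (x t) k l * u' l)) t := by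
  have hfk : HasDerivAt (fun s => f (x s) k) (fderiv ℝ (fun y => f y k) (x t) v) t :=
    ((differentiableAt_pi.mp hf) k).hasFDerivAt.comp_hasDerivAt t hx
  have hGkl : ∀ l, HasDerivAt (fun s => G (x s) k l) (fderiv ℝ (fun y => G y k l) (x t) v) t :=
    fun l => ((differentiableAt_pi.mp ((differentiableAt_pi.mp hG) k)) l).hasFDerivAt
      |>.comp_hasDerivAt t hx
  rw [← sum_add_distrib]
  exact hfk.add (HasDerivAt.fun_sum fun l _ => (hGkl l).mul (hasDerivAt_pi.mp hu l))

lemma abs_control_affine_deriv_le {ι κ : Type*} [Fintype ι] [DecidableEq ι] [Fintype κ]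
    {Df : (ι → ℝ) →L[ℝ] ℝ} {DG : κ → (ι → ℝ) →L[ℝ] ℝ} {v b : ι → ℝ} {g u w : κ → ℝ}
    {Lf : ℝ} {LG Γ V W : κ → ℝ}
    (hDf : ∀ p, |Df (Pi.single p 1)| ≤ Lf) (hDG : ∀ l p, |DG l (Pi.single p 1)| ≤ LG l)
    (hv : ∀ p, |v p| ≤ b p) (hg : ∀ l, |g l| ≤ Γ l) (hu : ∀ l, |u l| ≤ V l)
    (hw : ∀ l, |w l| ≤ W l) :
    |Df v + (∑ l, DG l v * u l + ∑ l, g l * w l)| ≤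
      (Lf + ∑ l, LG l * V l) * ∑ p, b p + ∑ l, Γ l * W l := by
  have hDGu : |∑ l, DG l v * u l| ≤ ∑ l, LG l * (∑ p, b p) * V l :=
    abs_sum_mul_le _ (fun l _ => (DG l).abs_apply_le_of_abs_apply_single_le (hDG l) hv)
      (fun l _ => hu l)
  have hgw : |∑ l, g l * w l| ≤ ∑ l, Γ l * W l :=
    abs_sum_mul_le _ (fun l _ => hg l) fun l _ => hw l
  calc |Df v + (∑ l, DG l v * u l + ∑ l, g l * w l)|
      ≤ Lf * ∑ p, b p + (∑ l, LG l * (∑ p, b p) * V l + ∑ l, Γ l * W l) :=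
        (abs_add_le _ _).trans (add_le_add (Df.abs_apply_le_of_abs_apply_single_le hDf hv)
          ((abs_add_le _ _).trans (add_le_add hDGu hgw)))
    _ = (Lf + ∑ l, LG l * V l) * ∑ p, b p + ∑ l, Γ l * W l := by
      simp only [add_mul, sum_mul, mul_right_comm (LG _)]
      ring

theorem second_order_taylor_overapprox_general (n m : ℕ)
    (Sset Uo : Set (Fin n → ℝ)) (hSU : Sset ⊆ Uo)
    (f : (Fin n → ℝ) → Fin n → ℝ) (G : (Fin n → ℝ) → Fin n → Fin m → ℝ)
    (hfd : ∀ y ∈ Uo, DifferentiableAt ℝ f y)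
    (hGd : ∀ y ∈ Uo, DifferentiableAt ℝ G y)
    (Lf F : Fin n → ℝ) (LG Γ : Fin n → Fin m → ℝ)
    (hpf : ∀ s ∈ Sset, ∀ (k p : Fin n),
      |fderiv ℝ (fun y => f y k) s (Pi.single p (1 : ℝ))| ≤ Lf k)
    (hpG : ∀ s ∈ Sset, ∀ (k : Fin n) (l : Fin m) (p : Fin n),
      |fderiv ℝ (fun y => G y k l) s (Pi.single p (1 : ℝ))| ≤ LG k l)
    (hFb : ∀ s ∈ Sset, ∀ k, |f s k| ≤ F k)
    (hΓb : ∀ s ∈ Sset, ∀ k l, |G s k l| ≤ Γ k l)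
    (t₀ Δt : ℝ) (hΔt : 0 < Δt)
    (u udot : ℝ → Fin m → ℝ)
    (hud : ∀ t ∈ Set.Icc t₀ (t₀ + Δt), HasDerivAt u (udot t) t)
    (V W : Fin m → ℝ)
    (hV : ∀ t ∈ Set.Icc t₀ (t₀ + Δt), ∀ l, |u t l| ≤ V l)
    (hW : ∀ t ∈ Set.Icc t₀ (t₀ + Δt), ∀ l, |udot t l| ≤ W l)
    (x : ℝ → Fin n → ℝ)
    (hx : ∀ t ∈ Set.Icc t₀ (t₀ + Δt),
      HasDerivAt x (fun k => f (x t) k + ∑ l, G (x t) k l * u t l) t)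
    (hxS : ∀ t ∈ Set.Icc t₀ (t₀ + Δt), x t ∈ Sset) :
    ∀ k, |x (t₀ + Δt) k - x t₀ k - Δt * (f (x t₀) k + ∑ l, G (x t₀) k l * u t₀ l)| ≤
      (Δt ^ 2 / 2) *
        ((Lf k + ∑ l, LG k l * V l) * (∑ p, (F p + ∑ l, Γ p l * V l))
          + ∑ l, Γ k l * W l) := by
  intro k
  have hvel : ∀ t ∈ Icc t₀ (t₀ + Δt), ∀ p,
      |f (x t) p + ∑ l, G (x t) p l * u t l| ≤ F p + ∑ l, Γ p l * V l := fun t ht p =>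
    (abs_add_le _ _).trans (add_le_add (hFb _ (hxS t ht) p)
      (abs_sum_mul_le _ (fun l _ => hΓb _ (hxS t ht) p l) (fun l _ => hV t ht l)))
  have htaylor := norm_sub_sub_smul_le_of_norm_deriv2_le (le_add_of_nonneg_right hΔt.le)
    (fun t ht => hasDerivAt_pi.mp (hx t ht) k)
    (fun t ht => hasDerivAt_control_affine_field (hfd _ (hSU (hxS t ht)))
      (hGd _ (hSU (hxS t ht))) (hx t ht) (hud t ht) k)
    (fun t ht => (Real.norm_eq_abs _).trans_le (abs_control_affine_deriv_le
      (hpf _ (hxS t ht) k) (hpG _ (hxS t ht) k) (hvel t ht) (hΓb _ (hxS t ht) k)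
      (hV t ht) (hW t ht)))
  rw [Real.norm_eq_abs, add_sub_cancel_left, smul_eq_mul] at htaylor
  exact htaylor.trans_eq (by ring)

theorem second_order_taylor_overapprox (n m : ℕ) (hn : 1 ≤ n) (hm : 1 ≤ m)
    (Sset Uo : Set (Fin n → ℝ)) (hUo : IsOpen Uo) (hSU : Sset ⊆ Uo)
    (f : (Fin n → ℝ) → Fin n → ℝ) (G : (Fin n → ℝ) → Fin n → Fin m → ℝ)
    (hfd : ∀ y ∈ Uo, DifferentiableAt ℝ f y)
    (hGd : ∀ y ∈ Uo, DifferentiableAt ℝ G y)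
    (Lf F : Fin n → ℝ) (LG Γ : Fin n → Fin m → ℝ)
    (hpf : ∀ s ∈ Sset, ∀ (k p : Fin n),
      |fderiv ℝ (fun y => f y k) s (Pi.single p (1 : ℝ))| ≤ Lf k)
    (hpG : ∀ s ∈ Sset, ∀ (k : Fin n) (l : Fin m) (p : Fin n),
      |fderiv ℝ (fun y => G y k l) s (Pi.single p (1 : ℝ))| ≤ LG k l)
    (hFb : ∀ s ∈ Sset, ∀ k, |f s k| ≤ F k)
    (hΓb : ∀ s ∈ Sset, ∀ k l, |G s k l| ≤ Γ k l)
    (t₀ Δt : ℝ) (hΔt : 0 < Δt)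
    (u udot : ℝ → Fin m → ℝ)
    (hud : ∀ t ∈ Set.Icc t₀ (t₀ + Δt), HasDerivAt u (udot t) t)
    (V W : Fin m → ℝ)
    (hV : ∀ t ∈ Set.Icc t₀ (t₀ + Δt), ∀ l, |u t l| ≤ V l)
    (hW : ∀ t ∈ Set.Icc t₀ (t₀ + Δt), ∀ l, |udot t l| ≤ W l)
    (x : ℝ → Fin n → ℝ)
    (hx : ∀ t ∈ Set.Icc t₀ (t₀ + Δt),
      HasDerivAt x (fun k => f (x t) k + ∑ l, G (x t) k l * u t l) t)
    (hxS : ∀ t ∈ Set.Icc t₀ (t₀ + Δt), x t ∈ Sset) :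
    ∀ k, |x (t₀ + Δt) k - x t₀ k - Δt * (f (x t₀) k + ∑ l, G (x t₀) k l * u t₀ l)| ≤
      (Δt ^ 2 / 2) *
        ((Lf k + ∑ l, LG k l * V l) * (∑ p, (F p + ∑ l, Γ p l * V l))
          + ∑ l, Γ k l * W l) :=
  second_order_taylor_overapprox_general n m Sset Uo hSU f G hfd hGd Lf F LG Γ hpf hpG hFb hΓb t₀ Δt
    hΔt u udot hud V W hV hW x hx hxS
end

section
/- Let n, m ≥ 1, S ⊆ ℝⁿ, and let f : ℝⁿ → ℝⁿ and G : ℝⁿ → ℝ^{n×m} be differentiable on an open set containing S, with |∂f_k/∂x_p(s)| ≤ L_{f,k}, |∂G_{k,l}/∂x_p(s)| ≤ L_{G,k,l}, |f_k(s)| ≤ F_k and |G_{k,l}(s)| ≤ Γ_{k,l} for all s ∈ S and all k, p, l. Let t₀ ∈ ℝ, Δt > 0, let u ∈ ℝᵐ be a constant control value with |u_l| ≤ V_l for all l, and let x : ℝ → ℝⁿ be differentiable on [t₀, t₀ + Δt] with ẋ(t) = f(x(t)) + G(x(t))·u and x(t) ∈ S for all t ∈ [t₀, t₀ + Δt]. Then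 there exist b ∈ ℝⁿ and matrices A⁺, A⁻ ∈ ℝ^{n×m} such that x(t₀ + Δt) = b + A⁺·u and x(t₀ + Δt) = b + A⁻·u, and for all k, l: |b_k − x_k(t₀) − Δt·f_k(x(t₀))| ≤ (Δt²/2)·L_{f,k}·Σ_{p=1}^n F_p; |A⁺_{k,l} − Δt·G_{k,l}(x(t₀))| ≤ (Δt²/2)·[ ( L_{f,k} + Σ_{l'=1}^m L_{G,k,l'}·V_{l'} )·Σ_{p=1}^n Γ_{p,l} + L_{G,k,l}·Σ_{p=1}^n F_p ]; and |A⁻_{k,l} − Δt·G_{k,l}(x(t₀))| ≤ (Δt²/2)·[ L_{f,k}·Σ_{p=1}^n Γ_{p,l} + L_{G,k,l}·Σ_{p=1}^n ( F_p + Σ_{l'=1}^m Γ_{p,l'}·V_{l'} ) ]. -/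
/-!
Along the trajectory the field `d t = f (x t) + G (x t) u` is differentiable, with derivative
`D(f + G u)(x t) (d t)`; the partial-derivative and size bounds on `S` bound its `k`-th component
by `(L_f k + ∑ l, L_G k l |u l|) * ∑ p, (F p + ∑ l, Γ p l |u l|)`. A second-order Taylor estimate
bounds the remainder `x (t₀ + Δt) - x t₀ - Δt d t₀` by `Δt² / 2` times this product, which is
at most `a + ∑ l, |u l| P l` for the coefficients of either `A⁺` or `A⁻`. Finally, any real `R`
with `|R| ≤ a + ∑ l, |u l| P l` is `β + ∑ l, r l u l` with `|β| ≤ a` and `|r l| ≤ P l`: clip `R`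
to `[-a, a]` for `β` and spread the rest over the `l` proportionally to `P l sign (u l)`.
-/

open Finset Set

section Splitting

theorem exists_abs_le_and_abs_sub_eq {R a : ℝ} (ha : 0 ≤ a) :
    ∃ β, |β| ≤ a ∧ |R - β| = max (|R| - a) 0 := by
  rcases le_or_gt a R with h | h
  · exact ⟨a, by rw [abs_of_nonneg ha], by
      rw [abs_of_nonneg (by linarith), abs_of_nonneg (by linarith), max_eq_left (by linarith)]⟩
  rcases le_or_gt R (-a) with h' | h'
  · exact ⟨-a, by rw [abs_neg, abs_of_nonneg ha], by
      rw [abs_of_nonpos (by linarith), abs_of_nonpos (by linarith), max_eq_left (by linarith)]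
      ring⟩
  · exact ⟨R, abs_le.mpr ⟨h'.le, h.le⟩, by
      rw [sub_self, abs_zero, max_eq_right (by linarith [abs_lt.mpr ⟨h', h⟩])]⟩

variable {κ : Type*} [Fintype κ]

theorem exists_sum_mul_eq_of_abs_le_sum {y : ℝ} {u P : κ → ℝ}
    (hP : ∀ l, 0 ≤ P l) (hy : |y| ≤ ∑ l, |u l| * P l) :
    ∃ r : κ → ℝ, y = ∑ l, r l * u l ∧ ∀ l, |r l| ≤ P l := by
  set S := ∑ l, |u l| * P l
  rcases (show 0 ≤ S from (abs_nonneg y).trans hy).eq_or_lt with hS | hS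
  · exact ⟨0, by simpa [← hS] using hy, fun l => by simpa using hP l⟩
  have hyS : |y / S| ≤ 1 := by rw [abs_div, abs_of_pos hS]; exact div_le_one_of_le₀ hy hS.le
  refine ⟨fun l => y / S * P l * SignType.sign (u l), ?_, fun l => ?_⟩
  · calc y = y / S * S := (div_mul_cancel₀ y hS.ne').symm
      _ = ∑ l, y / S * P l * SignType.sign (u l) * u l := by
        rw [Finset.mul_sum]
        refine Finset.sum_congr rfl fun l _ => ?_
        rw [mul_assoc _ (SignType.sign (u l) : ℝ), sign_mul_self]
        ring
  · calc |y / S * P l * SignType.sign (u l)| ≤ 1 * P l * 1 := by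
          have hsign : |(SignType.sign (u l) : ℝ)| ≤ 1 := by cases SignType.sign (u l) <;> simp
          have := hP l
          rw [abs_mul, abs_mul, abs_of_nonneg this]
          gcongr
      _ = P l := by ring

theorem exists_common_offset_decompositions {R a : ℝ} {u P Q : κ → ℝ} (ha : 0 ≤ a)
    (hP : ∀ l, 0 ≤ P l) (hQ : ∀ l, 0 ≤ Q l)
    (hRP : |R| ≤ a + ∑ l, |u l| * P l) (hRQ : |R| ≤ a + ∑ l, |u l| * Q l) :
    ∃ (β : ℝ) (r s : κ → ℝ), R = β + ∑ l, r l * u l ∧ R = β + ∑ l, s l * u l ∧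
      |β| ≤ a ∧ (∀ l, |r l| ≤ P l) ∧ ∀ l, |s l| ≤ Q l := by
  -- clipping `R` to `[-a, a]` gives an offset that serves both decompositions at once
  obtain ⟨β, hβ, hRβ⟩ := exists_abs_le_and_abs_sub_eq (R := R) ha
  have hle : ∀ W : κ → ℝ, (∀ l, 0 ≤ W l) → |R| ≤ a + ∑ l, |u l| * W l →
      |R - β| ≤ ∑ l, |u l| * W l := fun W hW hRW => by
    rw [hRβ]
    exact max_le (by linarith) (sum_nonneg fun l _ => mul_nonneg (abs_nonneg _) (hW l))
  obtain ⟨r, hr, hrP⟩ := exists_sum_mul_eq_of_abs_le_sum hP (hle P hP hRP)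
  obtain ⟨s, hs, hsQ⟩ := exists_sum_mul_eq_of_abs_le_sum hQ (hle Q hQ hRQ)
  exact ⟨β, r, s, by linarith, by linarith, hβ, hrP, hsQ⟩

end Splitting

theorem norm_sub_sub_smul_le_of_hasDerivAt {E : Type*} [NormedAddCommGroup E] [NormedSpace ℝ E]
    {y v w : ℝ → E} {a b C : ℝ} (hab : a ≤ b)
    (hy : ∀ t ∈ Icc a b, HasDerivAt y (v t) t) (hv : ∀ t ∈ Icc a b, HasDerivAt v (w t) t)
    (hw : ∀ t ∈ Icc a b, ‖w t‖ ≤ C) :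
    ‖y b - y a - (b - a) • v a‖ ≤ C * (b - a) ^ 2 / 2 := by
  -- `y t + (b - t) • v t` has derivative `(b - t) • w t`, dominated by that of the parabola
  let φ : ℝ → E := fun t => y t + (b - t) • v t - (y a + (b - a) • v a)
  have hφ : ∀ t ∈ Icc a b, HasDerivAt φ ((b - t) • w t) t := fun t ht => by
    refine (((hy t ht).add (((hasDerivAt_id t).const_sub b).smul (hv t ht))).sub_const
      (y a + (b - a) • v a)).congr_deriv ?_
    simp only [id, neg_one_smul]
    abel
  have hB : ∀ t, HasDerivAt (fun t => C * ((b - a) ^ 2 - (b - t) ^ 2) / 2) (C * (b - t)) t :=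
    fun t => by
      refine (((((hasDerivAt_id t).const_sub b).fun_pow 2).const_sub ((b - a) ^ 2)).const_mul C
        |>.div_const 2).congr_deriv ?_
      simp only [id]; ring
  have key := image_norm_le_of_norm_deriv_right_le_deriv_boundary (f := φ)
    (fun t ht => (hφ t ht).continuousAt.continuousWithinAt)
    (fun t ht => (hφ t (Ico_subset_Icc_self ht)).hasDerivWithinAt) (by simp [φ]) hB
    (fun t ht => by
      rw [norm_smul, Real.norm_of_nonneg (by linarith [ht.2]), mul_comm]
      exact mul_le_mul_of_nonneg_right (hw t (Ico_subset_Icc_self ht)) (by linarith [ht.2]))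
    (right_mem_Icc.mpr hab)
  simpa [φ, sub_sub] using key

theorem DifferentiableAt.hasDerivAt_comp_sum_partial {ι : Type*} [Fintype ι] [DecidableEq ι]
    {h : (ι → ℝ) → ℝ} {γ : ℝ → ι → ℝ} {v : ι → ℝ} {t : ℝ}
    (hh : DifferentiableAt ℝ h (γ t)) (hγ : HasDerivAt γ v t) :
    HasDerivAt (fun s => h (γ s)) (∑ p, fderiv ℝ h (γ t) (Pi.single p 1) * v p) t := by
  refine (hh.hasFDerivAt.comp_hasDerivAt t hγ).congr_deriv ?_
  conv_lhs => rw [pi_eq_sum_univ' v, map_sum]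
  simp only [map_smul, smul_eq_mul, mul_comm]

section Estimates

variable {ι κ : Type*} [Fintype ι] [Fintype κ]

theorem abs_sum_mul_le_mul_sum {a v D : ι → ℝ} {A : ℝ} (ha : ∀ p, |a p| ≤ A)
    (hv : ∀ p, |v p| ≤ D p) : |∑ p, a p * v p| ≤ A * ∑ p, D p := by
  rw [mul_sum]
  refine (abs_sum_le_sum_abs _ _).trans (sum_le_sum fun p _ => ?_)
  rw [abs_mul]
  exact mul_le_mul (ha p) (hv p) (abs_nonneg _) ((abs_nonneg _).trans (ha p))

theorem abs_add_sum_mul_le {c : ℝ} {g u : κ → ℝ} {C : ℝ} {Γ : κ → ℝ} (hc : |c| ≤ C)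
    (hg : ∀ l, |g l| ≤ Γ l) : |c + ∑ l, g l * u l| ≤ C + ∑ l, Γ l * |u l| := by
  refine (abs_add_le _ _).trans (add_le_add hc ((abs_sum_le_sum_abs _ _).trans
    (sum_le_sum fun l _ => ?_)))
  rw [abs_mul]
  exact mul_le_mul_of_nonneg_right (hg l) (abs_nonneg _)

theorem abs_sum_mul_add_sum_sum_mul_le {a v D : ι → ℝ} {c : κ → ι → ℝ} {u C : κ → ℝ} {A : ℝ}
    (ha : ∀ p, |a p| ≤ A) (hc : ∀ l p, |c l p| ≤ C l) (hv : ∀ p, |v p| ≤ D p) :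
    |∑ p, a p * v p + ∑ l, (∑ p, c l p * v p) * u l| ≤ (A + ∑ l, C l * |u l|) * ∑ p, D p :=
  calc _ ≤ A * ∑ p, D p + ∑ l, (C l * ∑ p, D p) * |u l| :=
        abs_add_sum_mul_le (abs_sum_mul_le_mul_sum ha hv)
          fun l => abs_sum_mul_le_mul_sum (hc l) hv
    _ = (A + ∑ l, C l * |u l|) * ∑ p, D p := by simp_rw [add_mul, sum_mul, mul_right_comm]

theorem sum_add_sum_mul_eq (F : ι → ℝ) (Γ : ι → κ → ℝ) (w : κ → ℝ) :
    ∑ p, (F p + ∑ l, Γ p l * w l) = ∑ p, F p + ∑ l, w l * ∑ p, Γ p l := by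
  simp only [sum_add_distrib, mul_sum]
  rw [sum_comm]
  simp only [mul_comm]

variable {a : ℝ} {α V w : κ → ℝ} {F : ι → ℝ} {Γ : ι → κ → ℝ}

/- The two ways of making the product linear in `w`: the term quadratic in `w` is bounded using
`w ≤ V` in the first factor (`_plus`) or in the second one (`_minus`). -/

theorem mul_sum_add_sum_mul_le_plus
    (hα : ∀ l, 0 ≤ α l) (hΓ : ∀ p l, 0 ≤ Γ p l) (hw : ∀ l, 0 ≤ w l) (hwV : ∀ l, w l ≤ V l) :
    (a + ∑ l, α l * w l) * ∑ p, (F p + ∑ l, Γ p l * w l) ≤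
      a * ∑ p, F p + ∑ l, w l * ((a + ∑ l', α l' * V l') * (∑ p, Γ p l) + α l * ∑ p, F p) := by
  have hαw : ∑ l, α l * w l ≤ ∑ l, α l * V l :=
    sum_le_sum fun l _ => mul_le_mul_of_nonneg_left (hwV l) (hα l)
  have hwΓ : 0 ≤ ∑ l, w l * ∑ p, Γ p l :=
    sum_nonneg fun l _ => mul_nonneg (hw l) (sum_nonneg fun p _ => hΓ p l)
  have hexp : ∑ l, w l * ((a + ∑ l', α l' * V l') * (∑ p, Γ p l) + α l * ∑ p, F p) =
      (a + ∑ l', α l' * V l') * ∑ l, w l * ∑ p, Γ p l + (∑ l, α l * w l) * ∑ p, F p := by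
    simp_rw [mul_add, mul_left_comm (w _), ← mul_assoc (α _)]
    rw [sum_add_distrib, ← mul_sum, ← sum_mul]
  rw [sum_add_sum_mul_eq, hexp]
  nlinarith [mul_le_mul_of_nonneg_right hαw hwΓ]

theorem mul_sum_add_sum_mul_le_minus
    (hα : ∀ l, 0 ≤ α l) (hΓ : ∀ p l, 0 ≤ Γ p l) (hw : ∀ l, 0 ≤ w l) (hwV : ∀ l, w l ≤ V l) :
    (a + ∑ l, α l * w l) * ∑ p, (F p + ∑ l, Γ p l * w l) ≤
      a * ∑ p, F p + ∑ l, w l * (a * (∑ p, Γ p l) + α l * ∑ p, (F p + ∑ l', Γ p l' * V l')) := by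
  have hαw : 0 ≤ ∑ l, α l * w l := sum_nonneg fun l _ => mul_nonneg (hα l) (hw l)
  have hwV' : ∑ p, (F p + ∑ l, Γ p l * w l) ≤ ∑ p, (F p + ∑ l, Γ p l * V l) :=
    sum_le_sum fun p _ => add_le_add_right
      (sum_le_sum fun l _ => mul_le_mul_of_nonneg_left (hwV l) (hΓ p l)) _
  have hexp : ∑ l, w l * (a * (∑ p, Γ p l) + α l * ∑ p, (F p + ∑ l', Γ p l' * V l')) =
      a * ∑ l, w l * ∑ p, Γ p l + (∑ l, α l * w l) * ∑ p, (F p + ∑ l', Γ p l' * V l') := by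
    simp_rw [mul_add, mul_left_comm (w _), ← mul_assoc (α _)]
    rw [sum_add_distrib, ← mul_sum, ← sum_mul]
  rw [hexp]
  have := mul_le_mul_of_nonneg_left hwV' hαw
  rw [sum_add_sum_mul_eq] at this ⊢
  nlinarith

theorem exists_affine_decompositions_of_abs_le_mul {R c : ℝ} {u : κ → ℝ} (hc : 0 ≤ c)
    (ha : 0 ≤ a) (hα : ∀ l, 0 ≤ α l) (hF : ∀ p, 0 ≤ F p) (hΓ : ∀ p l, 0 ≤ Γ p l)
    (hV : ∀ l, |u l| ≤ V l)
    (hR : |R| ≤ c * ((a + ∑ l, α l * |u l|) * ∑ p, (F p + ∑ l, Γ p l * |u l|))) :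
    ∃ (β : ℝ) (r s : κ → ℝ), R = β + ∑ l, r l * u l ∧ R = β + ∑ l, s l * u l ∧
      |β| ≤ c * (a * ∑ p, F p) ∧
      (∀ l, |r l| ≤ c * ((a + ∑ l', α l' * V l') * (∑ p, Γ p l) + α l * ∑ p, F p)) ∧
      ∀ l, |s l| ≤ c * (a * (∑ p, Γ p l) + α l * ∑ p, (F p + ∑ l', Γ p l' * V l')) := by
  have hV₀ (l) : 0 ≤ V l := (abs_nonneg _).trans (hV l)
  have hscale (P : κ → ℝ) (hP : (a + ∑ l, α l * |u l|) * ∑ p, (F p + ∑ l, Γ p l * |u l|) ≤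
      a * ∑ p, F p + ∑ l, |u l| * P l) :
      |R| ≤ c * (a * ∑ p, F p) + ∑ l, |u l| * (c * P l) :=
    calc |R| ≤ c * (a * ∑ p, F p + ∑ l, |u l| * P l) := hR.trans (by gcongr)
      _ = _ := by simp_rw [mul_add, mul_sum, mul_left_comm]
  exact exists_common_offset_decompositions
    (mul_nonneg hc (mul_nonneg ha (sum_nonneg fun p _ => hF p)))
    (fun l => mul_nonneg hc <| add_nonneg
      (mul_nonneg (add_nonneg ha (sum_nonneg fun l' _ => mul_nonneg (hα l') (hV₀ l')))
        (sum_nonneg fun p _ => hΓ p l))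
      (mul_nonneg (hα l) (sum_nonneg fun p _ => hF p)))
    (fun l => mul_nonneg hc <| add_nonneg (mul_nonneg ha (sum_nonneg fun p _ => hΓ p l))
      (mul_nonneg (hα l) (sum_nonneg fun p _ =>
        add_nonneg (hF p) (sum_nonneg fun l' _ => mul_nonneg (hΓ p l') (hV₀ l')))))
    (hscale _ (mul_sum_add_sum_mul_le_plus hα hΓ (fun l => abs_nonneg (u l)) hV))
    (hscale _ (mul_sum_add_sum_mul_le_minus hα hΓ (fun l => abs_nonneg (u l)) hV))

end Estimates

section ControlAffine

variable {ι κ : Type*} [Fintype ι] [DecidableEq ι] [Fintype κ]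
  (f : (ι → ℝ) → ι → ℝ) (G : (ι → ℝ) → ι → κ → ℝ) (u : κ → ℝ)

def controlField (y : ι → ℝ) : ι → ℝ := fun k => f y k + ∑ l, G y k l * u l

variable {f G}

theorem HasDerivAt.controlField_comp {x : ℝ → ι → ℝ} {v : ι → ℝ} {t : ℝ}
    (hf : DifferentiableAt ℝ f (x t)) (hG : DifferentiableAt ℝ G (x t)) (hx : HasDerivAt x v t)
    (k : ι) :
    HasDerivAt (fun s => controlField f G u (x s) k)
      (∑ p, fderiv ℝ (fun y => f y k) (x t) (Pi.single p 1) * v p +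
        ∑ l, (∑ p, fderiv ℝ (fun y => G y k l) (x t) (Pi.single p 1) * v p) * u l) t :=
  ((differentiableAt_pi.mp hf k).hasDerivAt_comp_sum_partial hx).add <|
    HasDerivAt.fun_sum fun l _ =>
      ((differentiableAt_pi.mp (differentiableAt_pi.mp hG k) l).hasDerivAt_comp_sum_partial
        hx).mul_const (u l)

theorem abs_sub_sub_mul_controlField_le {S : Set (ι → ℝ)}
    (hfd : ∀ y ∈ S, DifferentiableAt ℝ f y) (hGd : ∀ y ∈ S, DifferentiableAt ℝ G y)
    {Lf F : ι → ℝ} {LG Γ : ι → κ → ℝ}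
    (hpf : ∀ s ∈ S, ∀ k p, |fderiv ℝ (fun y => f y k) s (Pi.single p 1)| ≤ Lf k)
    (hpG : ∀ s ∈ S, ∀ k l p, |fderiv ℝ (fun y => G y k l) s (Pi.single p 1)| ≤ LG k l)
    (hFb : ∀ s ∈ S, ∀ k, |f s k| ≤ F k) (hΓb : ∀ s ∈ S, ∀ k l, |G s k l| ≤ Γ k l)
    {x : ℝ → ι → ℝ} {t₀ Δt : ℝ} (hΔt : 0 ≤ Δt)
    (hx : ∀ t ∈ Icc t₀ (t₀ + Δt), HasDerivAt x (controlField f G u (x t)) t)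
    (hxS : ∀ t ∈ Icc t₀ (t₀ + Δt), x t ∈ S) (k : ι) :
    |x (t₀ + Δt) k - x t₀ k - Δt * controlField f G u (x t₀) k| ≤
      Δt ^ 2 / 2 * ((Lf k + ∑ l, LG k l * |u l|) * ∑ p, (F p + ∑ l, Γ p l * |u l|)) := by
  have h := norm_sub_sub_smul_le_of_hasDerivAt (y := fun t => x t k) (by linarith)
    (fun t ht => hasDerivAt_pi.mp (hx t ht) k)
    (fun t ht => (hx t ht).controlField_comp u (hfd _ (hxS t ht)) (hGd _ (hxS t ht)) k)
    (fun t ht => abs_sum_mul_add_sum_sum_mul_le (hpf _ (hxS t ht) k) (hpG _ (hxS t ht) k)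
      fun p => abs_add_sum_mul_le (hFb _ (hxS t ht) p) (hΓb _ (hxS t ht) p))
  rw [add_sub_cancel_left, Real.norm_eq_abs, smul_eq_mul] at h
  linarith

end ControlAffine

theorem control_affine_linearization_general (n m : ℕ)
    (Sset Uo : Set (Fin n → ℝ)) (hSU : Sset ⊆ Uo)
    (f : (Fin n → ℝ) → Fin n → ℝ) (G : (Fin n → ℝ) → Fin n → Fin m → ℝ)
    (hfd : ∀ y ∈ Uo, DifferentiableAt ℝ f y)
    (hGd : ∀ y ∈ Uo, DifferentiableAt ℝ G y)
    (Lf F : Fin n → ℝ) (LG Γ : Fin n → Fin m → ℝ)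
    (hpf : ∀ s ∈ Sset, ∀ (k p : Fin n),
      |fderiv ℝ (fun y => f y k) s (Pi.single p (1 : ℝ))| ≤ Lf k)
    (hpG : ∀ s ∈ Sset, ∀ (k : Fin n) (l : Fin m) (p : Fin n),
      |fderiv ℝ (fun y => G y k l) s (Pi.single p (1 : ℝ))| ≤ LG k l)
    (hFb : ∀ s ∈ Sset, ∀ k, |f s k| ≤ F k)
    (hΓb : ∀ s ∈ Sset, ∀ k l, |G s k l| ≤ Γ k l)
    (t₀ Δt : ℝ) (hΔt : 0 < Δt)
    (u : Fin m → ℝ) (V : Fin m → ℝ) (hV : ∀ l, |u l| ≤ V l)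
    (x : ℝ → Fin n → ℝ)
    (hx : ∀ t ∈ Set.Icc t₀ (t₀ + Δt),
      HasDerivAt x (fun k => f (x t) k + ∑ l, G (x t) k l * u l) t)
    (hxS : ∀ t ∈ Set.Icc t₀ (t₀ + Δt), x t ∈ Sset) :
    ∃ (b : Fin n → ℝ) (Aplus Aminus : Fin n → Fin m → ℝ),
      (∀ k, x (t₀ + Δt) k = b k + ∑ l, Aplus k l * u l) ∧
      (∀ k, x (t₀ + Δt) k = b k + ∑ l, Aminus k l * u l) ∧
      (∀ k, |b k - x t₀ k - Δt * f (x t₀) k| ≤ (Δt ^ 2 / 2) * (Lf k * ∑ p, F p)) ∧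
      (∀ k l, |Aplus k l - Δt * G (x t₀) k l| ≤
        (Δt ^ 2 / 2) * ((Lf k + ∑ l', LG k l' * V l') * (∑ p, Γ p l)
          + LG k l * ∑ p, F p)) ∧
      (∀ k l, |Aminus k l - Δt * G (x t₀) k l| ≤
        (Δt ^ 2 / 2) * (Lf k * (∑ p, Γ p l)
          + LG k l * ∑ p, (F p + ∑ l', Γ p l' * V l'))) := by
  have hx₀ : x t₀ ∈ Sset := hxS t₀ ⟨le_rfl, by linarith⟩
  have hLf (k) : 0 ≤ Lf k := (abs_nonneg _).trans (hpf _ hx₀ k k)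
  have hLG (k l) : 0 ≤ LG k l := (abs_nonneg _).trans (hpG _ hx₀ k l k)
  have hF (p) : 0 ≤ F p := (abs_nonneg _).trans (hFb _ hx₀ p)
  have hΓ (p l) : 0 ≤ Γ p l := (abs_nonneg _).trans (hΓb _ hx₀ p l)
  have hR := abs_sub_sub_mul_controlField_le u (fun y hy => hfd y (hSU hy))
    (fun y hy => hGd y (hSU hy)) hpf hpG hFb hΓb hΔt.le hx hxS
  choose β r s hr hs hβ hrb hsb using fun k =>
    exists_affine_decompositions_of_abs_le_mul (by positivity) (hLf k) (hLG k) hF hΓ hV (hR k)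
  refine ⟨fun k => x t₀ k + Δt * f (x t₀) k + β k, fun k l => Δt * G (x t₀) k l + r k l,
    fun k l => Δt * G (x t₀) k l + s k l, fun k => ?_, fun k => ?_, fun k => ?_, fun k l => ?_,
    fun k l => ?_⟩
  · have := hr k
    simp only [controlField, add_mul, sum_add_distrib, ← mul_sum, mul_assoc] at this ⊢
    linarith
  · have := hs k
    simp only [controlField, add_mul, sum_add_distrib, ← mul_sum, mul_assoc] at this ⊢
    linarith
  · convert hβ k using 2; ring
  · convert hrb k l using 2; ring
  · convert hsb k l using 2; ring

theorem control_affine_linearization (n m : ℕ) (hn : 1 ≤ n) (hm : 1 ≤ m)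
    (Sset Uo : Set (Fin n → ℝ)) (hUo : IsOpen Uo) (hSU : Sset ⊆ Uo)
    (f : (Fin n → ℝ) → Fin n → ℝ) (G : (Fin n → ℝ) → Fin n → Fin m → ℝ)
    (hfd : ∀ y ∈ Uo, DifferentiableAt ℝ f y)
    (hGd : ∀ y ∈ Uo, DifferentiableAt ℝ G y)
    (Lf F : Fin n → ℝ) (LG Γ : Fin n → Fin m → ℝ)
    (hpf : ∀ s ∈ Sset, ∀ (k p : Fin n),
      |fderiv ℝ (fun y => f y k) s (Pi.single p (1 : ℝ))| ≤ Lf k)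
    (hpG : ∀ s ∈ Sset, ∀ (k : Fin n) (l : Fin m) (p : Fin n),
      |fderiv ℝ (fun y => G y k l) s (Pi.single p (1 : ℝ))| ≤ LG k l)
    (hFb : ∀ s ∈ Sset, ∀ k, |f s k| ≤ F k)
    (hΓb : ∀ s ∈ Sset, ∀ k l, |G s k l| ≤ Γ k l)
    (t₀ Δt : ℝ) (hΔt : 0 < Δt)
    (u : Fin m → ℝ) (V : Fin m → ℝ) (hV : ∀ l, |u l| ≤ V l)
    (x : ℝ → Fin n → ℝ)
    (hx : ∀ t ∈ Set.Icc t₀ (t₀ + Δt),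
      HasDerivAt x (fun k => f (x t) k + ∑ l, G (x t) k l * u l) t)
    (hxS : ∀ t ∈ Set.Icc t₀ (t₀ + Δt), x t ∈ Sset) :
    ∃ (b : Fin n → ℝ) (Aplus Aminus : Fin n → Fin m → ℝ),
      (∀ k, x (t₀ + Δt) k = b k + ∑ l, Aplus k l * u l) ∧
      (∀ k, x (t₀ + Δt) k = b k + ∑ l, Aminus k l * u l) ∧
      (∀ k, |b k - x t₀ k - Δt * f (x t₀) k| ≤ (Δt ^ 2 / 2) * (Lf k * ∑ p, F p)) ∧
      (∀ k l, |Aplus k l - Δt * G (x t₀) k l| ≤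
        (Δt ^ 2 / 2) * ((Lf k + ∑ l', LG k l' * V l') * (∑ p, Γ p l)
          + LG k l * ∑ p, F p)) ∧
      (∀ k l, |Aminus k l - Δt * G (x t₀) k l| ≤
        (Δt ^ 2 / 2) * (Lf k * (∑ p, Γ p l)
          + LG k l * ∑ p, (F p + ∑ l', Γ p l' * V l'))) :=
  control_affine_linearization_general n m Sset Uo hSU f G hfd hGd Lf F LG Γ hpf hpG hFb hΓb t₀ Δt
    hΔt u V hV x hx hxS
end

section
/- Let n, m ≥ 1 and let c(u, y) = yᵀQy + uᵀRu + 2·yᵀSu + qᵀy + rᵀu with Q ∈ ℝ^{n×n} symmetric, R ∈ ℝ^{m×m}, S ∈ ℝ^{n×m}, q ∈ ℝⁿ, r ∈ ℝᵐ. Let 𝒰 = ∏_{l=1}^m [u_lo_l, u_hi_l] with u_lo ≤ u_hi, and set v_l = max(|u_lo_l|, |u_hi_l|). Let b_lo ≤ b_hi in ℝⁿ and, for σ ∈ {+, −}, matrices A^σ_lo ≤ A^σ_hi in ℝ^{n×m} (entrywise); for u ∈ ℝᵐ define S^σ(u) = { b + M·u : b ∈ ℝⁿ, M ∈ ℝ^{n×m},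 b_lo ≤ b ≤ b_hi, A^σ_lo ≤ M ≤ A^σ_hi }. Let χ : 𝒰 → ℝⁿ satisfy χ(u) ∈ S⁺(u) ∩ S⁻(u) for every u ∈ 𝒰. Define c* = inf_{u ∈ 𝒰} c(u, χ(u)) and c_opt = inf_{u ∈ 𝒰} inf_{y ∈ S⁺(u) ∩ S⁻(u)} c(u, y). For σ ∈ {+, −} set W^σ = ‖w^σ‖₂ where w^σ_k = (b_hi_k − b_lo_k) + Σ_{l=1}^m (A^σ_hi − A^σ_lo)_{k,l}·v_l, and K^σ = sup{ ‖2·Q·z + 2·S·u + q‖₂ : u ∈ 𝒰, z ∈ S^σ(u') for some u' ∈ 𝒰 }. Then 0 ≤ c* − c_opt ≤ max(W⁺·K⁺, W⁻·K⁻). -/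
open Finset

/-- Membership of a vector in a box given by componentwise bounds. -/
def inBox {d : ℕ} (lo hi x : Fin d → ℝ) : Prop := ∀ i, lo i ≤ x i ∧ x i ≤ hi i

/-- Membership of a matrix in an interval matrix given by entrywise bounds. -/
def inMat {n m : ℕ} (lo hi M : Fin n → Fin m → ℝ) : Prop :=
  ∀ k l, lo k l ≤ M k l ∧ M k l ≤ hi k l

/-- The quadratic one-step cost c(u, y) = yᵀQy + uᵀRu + 2 yᵀSu + qᵀy + rᵀu. -/
noncomputable def quadCost {n m : ℕ} (Q : Fin n → Fin n → ℝ) (R : Fin m → Fin m → ℝ)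
    (S : Fin n → Fin m → ℝ) (q : Fin n → ℝ) (r : Fin m → ℝ)
    (u : Fin m → ℝ) (y : Fin n → ℝ) : ℝ :=
  (∑ k, ∑ p, y k * Q k p * y p) + (∑ l, ∑ j, u l * R l j * u j)
    + 2 * (∑ k, ∑ l, y k * S k l * u l) + (∑ k, q k * y k) + (∑ l, r l * u l)

/-- The affine-in-u set S^σ(u) = { b + M·u : b_lo ≤ b ≤ b_hi, A_lo ≤ M ≤ A_hi }. -/
def affSet {n m : ℕ} (blo bhi : Fin n → ℝ) (Alo Ahi : Fin n → Fin m → ℝ)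
    (u : Fin m → ℝ) : Set (Fin n → ℝ) :=
  {y | ∃ (b : Fin n → ℝ) (M : Fin n → Fin m → ℝ), inBox blo bhi b ∧ inMat Alo Ahi M ∧
    y = fun k => b k + ∑ l, M k l * u l}

/-!
For symmetric `Q` the cost is quadratic in the state, so the mean value theorem is exact at the
midpoint: `c(u, a) - c(u, b) = ⟪∇_y c(u, (a + b) / 2), a - b⟫`. Take `a = χ(u)` and any optimistic
state `b`. Both lie in the convex set `S⁺(u)`, so their midpoint does too and the gradient factor
is at most `K⁺`; and the interval widths bound `|a_k - b_k|` by `w⁺_k`. Cauchy–Schwarz then gives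
`c(u, χ(u)) - c(u, b) ≤ W⁺ K⁺`, and passing to infima gives the bound. The sets whose `sInf` and
`sSup` are taken are continuous images of compact boxes, hence bounded, so these are the true
infimum and supremum rather than Lean's junk value `0`.
-/

open Matrix

lemma csInf_le_csInf_add_of_forall_exists_le {s t : Set ℝ} {δ : ℝ} (hs : BddBelow s)
    (ht : t.Nonempty) (h : ∀ b ∈ t, ∃ a ∈ s, a ≤ b + δ) : sInf s ≤ sInf t + δ := by
  rw [← sub_le_iff_le_add]
  refine le_csInf ht fun b hb => ?_
  obtain ⟨a, ha, hab⟩ := h b hb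
  linarith [csInf_le hs ha]

section
variable {n m : ℕ}

lemma inBox_iff_mem_Icc {d : ℕ} {lo hi x : Fin d → ℝ} : inBox lo hi x ↔ x ∈ Set.Icc lo hi := by
  simp only [inBox, Set.mem_Icc, Pi.le_def, forall_and]

lemma inMat_iff_mem_Icc {lo hi M : Fin n → Fin m → ℝ} : inMat lo hi M ↔ M ∈ Set.Icc lo hi := by
  simp only [inMat, Set.mem_Icc, Pi.le_def, forall_and]

lemma affSet_eq_image (blo bhi : Fin n → ℝ) (Alo Ahi : Fin n → Fin m → ℝ) (u : Fin m → ℝ) :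
    affSet blo bhi Alo Ahi u =
      (fun p : (Fin n → ℝ) × (Fin n → Fin m → ℝ) => fun k => p.1 k + ∑ l, p.2 k l * u l) ''
        Set.Icc blo bhi ×ˢ Set.Icc Alo Ahi := by
  ext y
  simp only [affSet, inBox_iff_mem_Icc, inMat_iff_mem_Icc, Set.mem_image, Set.mem_prod,
    Prod.exists, Set.mem_ofPred_eq, and_assoc, eq_comm]

lemma convex_affSet (blo bhi : Fin n → ℝ) (Alo Ahi : Fin n → Fin m → ℝ) (u : Fin m → ℝ) :
    Convex ℝ (affSet blo bhi Alo Ahi u) := by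
  rw [affSet_eq_image]
  refine ((convex_Icc blo bhi).prod (convex_Icc Alo Ahi)).is_linear_image ⟨?_, ?_⟩
  · intro x y
    funext k
    simp only [Prod.fst_add, Prod.snd_add, Pi.add_apply, add_mul, Finset.sum_add_distrib]
    ring
  · intro c x
    funext k
    simp only [Prod.smul_fst, Prod.smul_snd, Pi.smul_apply, smul_eq_mul, mul_add, Finset.mul_sum,
      mul_assoc]

lemma isCompact_affSet_graph (ulo uhi : Fin m → ℝ) (blo bhi : Fin n → ℝ)
    (Alo Ahi : Fin n → Fin m → ℝ) :
    IsCompact {p : (Fin m → ℝ) × (Fin n → ℝ) |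
      inBox ulo uhi p.1 ∧ p.2 ∈ affSet blo bhi Alo Ahi p.1} := by
  have hgraph : {p : (Fin m → ℝ) × (Fin n → ℝ) |
      inBox ulo uhi p.1 ∧ p.2 ∈ affSet blo bhi Alo Ahi p.1} =
      (fun x : (Fin m → ℝ) × (Fin n → ℝ) × (Fin n → Fin m → ℝ) =>
        (x.1, fun k => x.2.1 k + ∑ l, x.2.2 k l * x.1 l)) ''
        Set.Icc ulo uhi ×ˢ Set.Icc blo bhi ×ˢ Set.Icc Alo Ahi := by
    ext ⟨u, y⟩
    simp only [affSet_eq_image, inBox_iff_mem_Icc, Set.mem_ofPred_eq, Set.mem_image, Set.mem_prod,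
      Prod.exists, Prod.mk.injEq]
    constructor
    · rintro ⟨hu, b, M, ⟨hb, hM⟩, rfl⟩; exact ⟨u, b, M, ⟨hu, hb, hM⟩, rfl, rfl⟩
    · rintro ⟨u, b, M, ⟨hu, hb, hM⟩, rfl, rfl⟩; exact ⟨hu, b, M, ⟨hb, hM⟩, rfl⟩
  rw [hgraph]
  exact (isCompact_Icc.prod (isCompact_Icc.prod isCompact_Icc)).image (by fun_prop)

lemma continuous_quadCost (Q : Fin n → Fin n → ℝ) (R : Fin m → Fin m → ℝ)
    (S : Fin n → Fin m → ℝ) (q : Fin n → ℝ) (r : Fin m → ℝ) :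
    Continuous fun p : (Fin m → ℝ) × (Fin n → ℝ) => quadCost Q R S q r p.1 p.2 := by
  unfold quadCost; fun_prop

lemma dotProduct_mulVec_comm_of_isSymm {ι R : Type*} [Fintype ι] [CommSemiring R]
    {Q : Matrix ι ι R} (hQ : Q.IsSymm) (a b : ι → R) : a ⬝ᵥ Q *ᵥ b = b ⬝ᵥ Q *ᵥ a := by
  rw [dotProduct_mulVec, ← mulVec_transpose, hQ.eq, dotProduct_comm]

lemma sub_dotProduct_mulVec_add {ι R : Type*} [Fintype ι] [CommRing R]
    {Q : Matrix ι ι R} (hQ : Q.IsSymm) (a b : ι → R) :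
    (a - b) ⬝ᵥ Q *ᵥ (a + b) = a ⬝ᵥ Q *ᵥ a - b ⬝ᵥ Q *ᵥ b := by
  rw [mulVec_add, dotProduct_add, sub_dotProduct, sub_dotProduct,
    dotProduct_mulVec_comm_of_isSymm hQ b a]
  ring

lemma quadCost_eq_dotProduct (Q : Fin n → Fin n → ℝ) (R : Fin m → Fin m → ℝ)
    (S : Fin n → Fin m → ℝ) (q : Fin n → ℝ) (r : Fin m → ℝ) (u : Fin m → ℝ) (y : Fin n → ℝ) :
    quadCost Q R S q r u y =
      y ⬝ᵥ of Q *ᵥ y + u ⬝ᵥ of R *ᵥ u + 2 * (y ⬝ᵥ of S *ᵥ u) + q ⬝ᵥ y + r ⬝ᵥ u := by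
  simp only [quadCost, dotProduct, mulVec, of_apply, Finset.mul_sum, mul_assoc]

/-- The gradient in `y` of `quadCost Q R S q r u y` at `z`, when `Q` is symmetric. -/
def costGrad (Q : Fin n → Fin n → ℝ) (S : Fin n → Fin m → ℝ) (q : Fin n → ℝ) (u : Fin m → ℝ)
    (z : Fin n → ℝ) : Fin n → ℝ :=
  fun k => 2 * (∑ p, Q k p * z p) + 2 * (∑ l, S k l * u l) + q k

lemma costGrad_eq (Q : Fin n → Fin n → ℝ) (S : Fin n → Fin m → ℝ) (q : Fin n → ℝ) (u : Fin m → ℝ)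
    (z : Fin n → ℝ) : costGrad Q S q u z = (2 : ℝ) • of Q *ᵥ z + (2 : ℝ) • of S *ᵥ u + q :=
  rfl

lemma quadCost_sub_quadCost {Q : Fin n → Fin n → ℝ} (hQ : ∀ k p, Q k p = Q p k)
    (R : Fin m → Fin m → ℝ) (S : Fin n → Fin m → ℝ) (q : Fin n → ℝ) (r : Fin m → ℝ)
    (u : Fin m → ℝ) (a b : Fin n → ℝ) :
    quadCost Q R S q r u a - quadCost Q R S q r u b =
      costGrad Q S q u (midpoint ℝ a b) ⬝ᵥ (a - b) := by
  have hQ' : (of Q).IsSymm := IsSymm.ext fun k p => hQ p k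
  rw [quadCost_eq_dotProduct, quadCost_eq_dotProduct, costGrad_eq, midpoint_eq_smul_add,
    mulVec_smul, smul_smul, mul_invOf_self, one_smul, dotProduct_comm _ (a - b),
    dotProduct_add, dotProduct_add, sub_dotProduct_mulVec_add hQ',
    dotProduct_smul, sub_dotProduct, sub_dotProduct, smul_eq_mul, dotProduct_comm a q,
    dotProduct_comm b q]
  ring

lemma abs_sub_le_of_mem_affSet {blo bhi : Fin n → ℝ} {Alo Ahi : Fin n → Fin m → ℝ}
    {u v : Fin m → ℝ} {y₁ y₂ : Fin n → ℝ} (hu : ∀ l, |u l| ≤ v l)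
    (hy₁ : y₁ ∈ affSet blo bhi Alo Ahi u) (hy₂ : y₂ ∈ affSet blo bhi Alo Ahi u) (k : Fin n) :
    |y₁ k - y₂ k| ≤ (bhi k - blo k) + ∑ l, (Ahi k l - Alo k l) * v l := by
  obtain ⟨b₁, M₁, hb₁, hM₁, rfl⟩ := hy₁
  obtain ⟨b₂, M₂, hb₂, hM₂, rfl⟩ := hy₂
  have hb : |b₁ k - b₂ k| ≤ bhi k - blo k :=
    abs_sub_le_iff.2 ⟨by linarith [(hb₁ k).2, (hb₂ k).1], by linarith [(hb₁ k).1, (hb₂ k).2]⟩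
  have hM : ∀ l, |M₁ k l - M₂ k l| ≤ Ahi k l - Alo k l := fun l =>
    abs_sub_le_iff.2
      ⟨by linarith [(hM₁ k l).2, (hM₂ k l).1], by linarith [(hM₁ k l).1, (hM₂ k l).2]⟩
  calc |b₁ k + ∑ l, M₁ k l * u l - (b₂ k + ∑ l, M₂ k l * u l)|
      = |(b₁ k - b₂ k) + ∑ l, (M₁ k l - M₂ k l) * u l| := by
        rw [← sub_add_sub_comm, ← Finset.sum_sub_distrib]
        simp only [sub_mul]
    _ ≤ |b₁ k - b₂ k| + ∑ l, |M₁ k l - M₂ k l| * |u l| := by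
        refine (abs_add_le _ _).trans (add_le_add le_rfl ((abs_sum_le_sum_abs _ _).trans ?_))
        simp only [abs_mul, le_refl]
    _ ≤ (bhi k - blo k) + ∑ l, (Ahi k l - Alo k l) * v l :=
        add_le_add hb (Finset.sum_le_sum fun l _ =>
          mul_le_mul (hM l) (hu l) (abs_nonneg _) ((abs_nonneg _).trans (hM l)))

lemma quadCost_sub_le_of_mem_affSet {Q : Fin n → Fin n → ℝ} (hQ : ∀ k p, Q k p = Q p k)
    (R : Fin m → Fin m → ℝ) (S : Fin n → Fin m → ℝ) (q : Fin n → ℝ) (r : Fin m → ℝ)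
    {blo bhi : Fin n → ℝ} {Alo Ahi : Fin n → Fin m → ℝ}
    {u v : Fin m → ℝ} {y₁ y₂ : Fin n → ℝ} (hu : ∀ l, |u l| ≤ v l)
    (hy₁ : y₁ ∈ affSet blo bhi Alo Ahi u) (hy₂ : y₂ ∈ affSet blo bhi Alo Ahi u) :
    quadCost Q R S q r u y₁ - quadCost Q R S q r u y₂ ≤
      √(∑ k, ((bhi k - blo k) + ∑ l, (Ahi k l - Alo k l) * v l) ^ 2) *
        √(∑ k, costGrad Q S q u (midpoint ℝ y₁ y₂) k ^ 2) := by
  rw [quadCost_sub_quadCost hQ, mul_comm]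
  refine (Real.sum_mul_le_sqrt_mul_sqrt _ _ _).trans
    (mul_le_mul_of_nonneg_left (Real.sqrt_le_sqrt (Finset.sum_le_sum fun k _ => ?_))
      (Real.sqrt_nonneg _))
  exact sq_le_sq.2 ((abs_sub_le_of_mem_affSet hu hy₁ hy₂ k).trans (le_abs_self _))

lemma bddBelow_quadCost_affSet (Q : Fin n → Fin n → ℝ) (R : Fin m → Fin m → ℝ)
    (S : Fin n → Fin m → ℝ) (q : Fin n → ℝ) (r : Fin m → ℝ) (ulo uhi : Fin m → ℝ)
    (blo bhi : Fin n → ℝ) (Alo Ahi : Fin n → Fin m → ℝ) :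
    BddBelow {c : ℝ | ∃ u, inBox ulo uhi u ∧ ∃ y ∈ affSet blo bhi Alo Ahi u,
      c = quadCost Q R S q r u y} := by
  refine ((isCompact_affSet_graph ulo uhi blo bhi Alo Ahi).bddBelow_image
    (continuous_quadCost Q R S q r).continuousOn).mono ?_
  rintro _ ⟨u, hu, y, hy, rfl⟩
  exact ⟨(u, y), ⟨hu, hy⟩, rfl⟩

lemma bddAbove_costGrad_norm_affSet (Q : Fin n → Fin n → ℝ) (S : Fin n → Fin m → ℝ)
    (q : Fin n → ℝ) (ulo uhi : Fin m → ℝ) (blo bhi : Fin n → ℝ) (Alo Ahi : Fin n → Fin m → ℝ) :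
    BddAbove {c : ℝ | ∃ u, inBox ulo uhi u ∧ ∃ u', inBox ulo uhi u' ∧
      ∃ z ∈ affSet blo bhi Alo Ahi u', c = √(∑ k, costGrad Q S q u z k ^ 2)} := by
  have hcont : Continuous fun x : (Fin m → ℝ) × (Fin m → ℝ) × (Fin n → ℝ) =>
      √(∑ k, costGrad Q S q x.1 x.2.2 k ^ 2) := by
    unfold costGrad; fun_prop
  have hcompact := (isCompact_Icc : IsCompact (Set.Icc ulo uhi)).prod
    (isCompact_affSet_graph ulo uhi blo bhi Alo Ahi)
  refine (hcompact.bddAbove_image hcont.continuousOn).mono ?_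
  rintro _ ⟨u, hu, u', hu', z, hz, rfl⟩
  exact ⟨(u, u', z), ⟨inBox_iff_mem_Icc.1 hu, hu', hz⟩, rfl⟩

lemma quadCost_sub_le_width_mul_sSup {Q : Fin n → Fin n → ℝ} (hQ : ∀ k p, Q k p = Q p k)
    (R : Fin m → Fin m → ℝ) (S : Fin n → Fin m → ℝ) (q : Fin n → ℝ) (r : Fin m → ℝ)
    {ulo uhi v : Fin m → ℝ} (hv : ∀ l, v l = max |ulo l| |uhi l|)
    {blo bhi : Fin n → ℝ} {Alo Ahi : Fin n → Fin m → ℝ} {u : Fin m → ℝ} {y₁ y₂ : Fin n → ℝ}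
    (hu : inBox ulo uhi u) (hy₁ : y₁ ∈ affSet blo bhi Alo Ahi u)
    (hy₂ : y₂ ∈ affSet blo bhi Alo Ahi u) :
    quadCost Q R S q r u y₁ - quadCost Q R S q r u y₂ ≤
      √(∑ k, ((bhi k - blo k) + ∑ l, (Ahi k l - Alo k l) * v l) ^ 2) *
        sSup {c : ℝ | ∃ u, inBox ulo uhi u ∧ ∃ u', inBox ulo uhi u' ∧
          ∃ z ∈ affSet blo bhi Alo Ahi u', c = √(∑ k, costGrad Q S q u z k ^ 2)} := by
  have huv : ∀ l, |u l| ≤ v l := fun l => (hv l).symm ▸ abs_le_max_abs_abs (hu l).1 (hu l).2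
  have hgrad := le_csSup (bddAbove_costGrad_norm_affSet Q S q ulo uhi blo bhi Alo Ahi)
    ⟨u, hu, u, hu, _, (convex_affSet _ _ _ _ u).midpoint_mem hy₁ hy₂, rfl⟩
  exact (quadCost_sub_le_of_mem_affSet hQ R S q r huv hy₁ hy₂).trans
    (mul_le_mul_of_nonneg_left hgrad (Real.sqrt_nonneg _))

end

theorem optimistic_suboptimality_bound_general (n m : ℕ)
    (Q : Fin n → Fin n → ℝ) (hQ : ∀ k p, Q k p = Q p k)
    (R : Fin m → Fin m → ℝ) (S : Fin n → Fin m → ℝ)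
    (q : Fin n → ℝ) (r : Fin m → ℝ)
    (ulo uhi : Fin m → ℝ) (hu : ∀ l, ulo l ≤ uhi l)
    (v : Fin m → ℝ) (hv : ∀ l, v l = max |ulo l| |uhi l|)
    (blo bhi : Fin n → ℝ)
    (Aplo Aphi Amlo Amhi : Fin n → Fin m → ℝ)
    (χ : (Fin m → ℝ) → (Fin n → ℝ))
    (hχ : ∀ u, inBox ulo uhi u →
      χ u ∈ affSet blo bhi Aplo Aphi u ∩ affSet blo bhi Amlo Amhi u)
    (cstar copt : ℝ)
    (hcstar : cstar = sInf {c : ℝ | ∃ u, inBox ulo uhi u ∧ c = quadCost Q R S q r u (χ u)})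
    (hcopt : copt = sInf {c : ℝ | ∃ u, inBox ulo uhi u ∧
      ∃ y ∈ affSet blo bhi Aplo Aphi u ∩ affSet blo bhi Amlo Amhi u,
        c = quadCost Q R S q r u y})
    (Wp Wm Kp Km : ℝ)
    (hWp : Wp = Real.sqrt (∑ k, ((bhi k - blo k) + ∑ l, (Aphi k l - Aplo k l) * v l) ^ 2))
    (hKp : Kp = sSup {c : ℝ | ∃ u, inBox ulo uhi u ∧ ∃ u', inBox ulo uhi u' ∧
      ∃ z ∈ affSet blo bhi Aplo Aphi u',
        c = Real.sqrt (∑ k, (2 * (∑ p, Q k p * z p) + 2 * (∑ l, S k l * u l) + q k) ^ 2)}) :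
    0 ≤ cstar - copt ∧ cstar - copt ≤ max (Wp * Kp) (Wm * Km) := by
  subst hcstar hcopt
  set achieved := {c : ℝ | ∃ u, inBox ulo uhi u ∧ c = quadCost Q R S q r u (χ u)}
  set feasible := {c : ℝ | ∃ u, inBox ulo uhi u ∧
    ∃ y ∈ affSet blo bhi Aplo Aphi u ∩ affSet blo bhi Amlo Amhi u, c = quadCost Q R S q r u y}
  have hsub : achieved ⊆ feasible := by
    rintro _ ⟨u, hub, rfl⟩
    exact ⟨u, hub, χ u, hχ u hub, rfl⟩
  have hbdd : BddBelow feasible :=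
    (bddBelow_quadCost_affSet Q R S q r ulo uhi blo bhi Aplo Aphi).mono <| by
      rintro _ ⟨u, hub, y, hy, rfl⟩
      exact ⟨u, hub, y, hy.1, rfl⟩
  have hne : achieved.Nonempty := ⟨_, ulo, fun l => ⟨le_rfl, hu l⟩, rfl⟩
  refine ⟨sub_nonneg.2 (csInf_le_csInf hbdd hne hsub), le_max_of_le_left ?_⟩
  rw [sub_le_iff_le_add']
  refine csInf_le_csInf_add_of_forall_exists_le (hbdd.mono hsub) (hne.mono hsub) ?_
  rintro _ ⟨u, hub, y, hy, rfl⟩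
  have hgap : quadCost Q R S q r u (χ u) - quadCost Q R S q r u y ≤ Wp * Kp := by
    rw [hWp, hKp]
    exact quadCost_sub_le_width_mul_sSup hQ R S q r hv hub (hχ u hub).1 hy.1
  exact ⟨_, ⟨u, hub, rfl⟩, by linarith⟩

theorem optimistic_suboptimality_bound (n m : ℕ) (hn : 1 ≤ n) (hm : 1 ≤ m)
    (Q : Fin n → Fin n → ℝ) (hQ : ∀ k p, Q k p = Q p k)
    (R : Fin m → Fin m → ℝ) (S : Fin n → Fin m → ℝ)
    (q : Fin n → ℝ) (r : Fin m → ℝ)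
    (ulo uhi : Fin m → ℝ) (hu : ∀ l, ulo l ≤ uhi l)
    (v : Fin m → ℝ) (hv : ∀ l, v l = max |ulo l| |uhi l|)
    (blo bhi : Fin n → ℝ) (hb : ∀ k, blo k ≤ bhi k)
    (Aplo Aphi Amlo Amhi : Fin n → Fin m → ℝ)
    (hAp : ∀ k l, Aplo k l ≤ Aphi k l) (hAm : ∀ k l, Amlo k l ≤ Amhi k l)
    (χ : (Fin m → ℝ) → (Fin n → ℝ))
    (hχ : ∀ u, inBox ulo uhi u →
      χ u ∈ affSet blo bhi Aplo Aphi u ∩ affSet blo bhi Amlo Amhi u)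
    (cstar copt : ℝ)
    (hcstar : cstar = sInf {c : ℝ | ∃ u, inBox ulo uhi u ∧ c = quadCost Q R S q r u (χ u)})
    (hcopt : copt = sInf {c : ℝ | ∃ u, inBox ulo uhi u ∧
      ∃ y ∈ affSet blo bhi Aplo Aphi u ∩ affSet blo bhi Amlo Amhi u,
        c = quadCost Q R S q r u y})
    (Wp Wm Kp Km : ℝ)
    (hWp : Wp = Real.sqrt (∑ k, ((bhi k - blo k) + ∑ l, (Aphi k l - Aplo k l) * v l) ^ 2))
    (hWm : Wm = Real.sqrt (∑ k, ((bhi k - blo k) + ∑ l, (Amhi k l - Amlo k l) * v l) ^ 2))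
    (hKp : Kp = sSup {c : ℝ | ∃ u, inBox ulo uhi u ∧ ∃ u', inBox ulo uhi u' ∧
      ∃ z ∈ affSet blo bhi Aplo Aphi u',
        c = Real.sqrt (∑ k, (2 * (∑ p, Q k p * z p) + 2 * (∑ l, S k l * u l) + q k) ^ 2)})
    (hKm : Km = sSup {c : ℝ | ∃ u, inBox ulo uhi u ∧ ∃ u', inBox ulo uhi u' ∧
      ∃ z ∈ affSet blo bhi Amlo Amhi u',
        c = Real.sqrt (∑ k, (2 * (∑ p, Q k p * z p) + 2 * (∑ l, S k l * u l) + q k) ^ 2)}) :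
    0 ≤ cstar - copt ∧ cstar - copt ≤ max (Wp * Kp) (Wm * Km) :=
  optimistic_suboptimality_bound_general n m Q hQ R S q r ulo uhi hu v hv blo bhi Aplo Aphi Amlo
    Amhi χ hχ cstar copt hcstar hcopt Wp Wm Kp Km hWp hKp
end
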